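/- arXiv:1510.03552 — 4 statements merged into one kernel-verified Lean document; each statement's English description precedes it below -/
import Mathlib

section
/- Let d>0, α≥0, T>0, h1<h2, and let β,γ:ℝ→ℝ be continuous T-periodic functions with β(t)>0 and γ(t)>0 for all t. Set L=h2−h1 and μ*=((1/T)∫_0^T β(t)dt)/(d(π/L)²+α²/(4d)+(1/T)∫_0^T γ(t)dt). Define u(x,t)=exp(∫_0^t(−γ(s)−d(π/L)²−α²/(4d)+β(s)/μ*)ds)·e^{αx/(2d)}·cos((π/L)(x−(h1+h2)/2)). Then μ*>0 and u satisfies: (a) u_t(x,t)−d·u_xx(x,t)+α·u_x(x,t)=−γ(t)u(x,t)+(β(t)/μ*)u(x,t) for all x∈(h1,h2) and t∈ℝ; (b) u(h1,t)=u(h2,t)=0 for all t; (c) u(x,t+T)=u(x,t) for all x,t (T-periodicity); (d) u(x,t)>0 for all x∈(h1,h2) and t∈ℝ. In other words, u is a positive T-periodic solution of the periodic-parabolic eigenvalue problem φ_t−dφ_xx+αφ_x=−γ(t)φ+(β(t)/μ0)φ on (h1,h2) with Dirichlet boundary conditions, with eigenvalue parameter μ0=μ*. -/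
noncomputable def pX (u : ℝ → ℝ → ℝ) (x t : ℝ) : ℝ := deriv (fun y => u y t) x
noncomputable def pXX (u : ℝ → ℝ → ℝ) (x t : ℝ) : ℝ := deriv (fun y => pX u y t) x
noncomputable def pT (u : ℝ → ℝ → ℝ) (x t : ℝ) : ℝ := deriv (fun s => u x s) t

/-!
Separation of variables. With `k = π/L` and `m` the midpoint, the spatial factor
`X x = e^{αx/(2d)} cos(k(x - m))` satisfies `-d X'' + α X' = (d k² + α²/(4d)) X`, is positive on
`(h1, h2)` and vanishes at its ends. The time factor `exp (∫₀ᵗ f)` then solves the equation, and it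
is `T`-periodic because `f` is periodic and `μ*` is chosen exactly so that `∫₀ᵀ f = 0`.
-/

open Real Function intervalIntegral

section Separable

variable {E E' X X' X'' : ℝ → ℝ}

lemma pX_mul_of_hasDerivAt (hX : ∀ x, HasDerivAt X (X' x) x) (x t : ℝ) :
    pX (fun x t => E t * X x) x t = E t * X' x :=
  ((hX x).const_mul (E t)).deriv

lemma pXX_mul_of_hasDerivAt (hX : ∀ x, HasDerivAt X (X' x) x)
    (hX' : ∀ x, HasDerivAt X' (X'' x) x) (x t : ℝ) :
    pXX (fun x t => E t * X x) x t = E t * X'' x := by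
  simp only [pXX, pX_mul_of_hasDerivAt hX]
  exact ((hX' x).const_mul (E t)).deriv

lemma pT_mul_of_hasDerivAt (hE : ∀ t, HasDerivAt E (E' t) t) (x t : ℝ) :
    pT (fun x t => E t * X x) x t = E' t * X x :=
  ((hE t).mul_const (X x)).deriv

lemma pT_sub_pXX_add_pX_of_separable {f : ℝ → ℝ} {d α ω : ℝ}
    (hE : ∀ t, HasDerivAt E (E t * f t) t) (hX : ∀ x, HasDerivAt X (X' x) x)
    (hX' : ∀ x, HasDerivAt X' (X'' x) x) (hω : ∀ x, -d * X'' x + α * X' x = ω * X x)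
    (x t : ℝ) :
    pT (fun x t => E t * X x) x t - d * pXX (fun x t => E t * X x) x t
        + α * pX (fun x t => E t * X x) x t = (f t + ω) * (E t * X x) := by
  rw [pT_mul_of_hasDerivAt hE, pXX_mul_of_hasDerivAt hX hX', pX_mul_of_hasDerivAt hX]
  linear_combination E t * hω x

end Separable

section SpatialFactor

variable (c k m : ℝ)

noncomputable def expCos (x : ℝ) : ℝ := exp (c * x) * cos (k * (x - m))

noncomputable def expSin (x : ℝ) : ℝ := exp (c * x) * sin (k * (x - m))

lemma hasDerivAt_expCos (x : ℝ) :
    HasDerivAt (expCos c k m) (c * expCos c k m x - k * expSin c k m x) x := by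
  have hlin : HasDerivAt (fun y => k * (y - m)) k x := by
    simpa using ((hasDerivAt_id x).sub_const m).const_mul k
  refine (((hasDerivAt_id' x).const_mul c).exp.fun_mul hlin.cos).congr_deriv ?_
  simp only [expCos, expSin]
  ring

lemma hasDerivAt_expSin (x : ℝ) :
    HasDerivAt (expSin c k m) (c * expSin c k m x + k * expCos c k m x) x := by
  have hlin : HasDerivAt (fun y => k * (y - m)) k x := by
    simpa using ((hasDerivAt_id x).sub_const m).const_mul k
  refine (((hasDerivAt_id' x).const_mul c).exp.fun_mul hlin.sin).congr_deriv ?_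
  simp only [expCos, expSin]
  ring

lemma hasDerivAt_deriv_expCos (x : ℝ) :
    HasDerivAt (fun y => c * expCos c k m y - k * expSin c k m y)
      ((c ^ 2 - k ^ 2) * expCos c k m x - 2 * c * k * expSin c k m x) x := by
  refine (((hasDerivAt_expCos c k m x).const_mul c).sub
    ((hasDerivAt_expSin c k m x).const_mul k)).congr_deriv ?_
  ring

/-- The choice `2dc = α` makes the drift cancel the cross term of `∂ₓₓ`. -/
lemma drift_diffusion_expCos {d α : ℝ} (hd : d ≠ 0) (hc : 2 * d * c = α) (x : ℝ) :
    -d * ((c ^ 2 - k ^ 2) * expCos c k m x - 2 * c * k * expSin c k m x)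
        + α * (c * expCos c k m x - k * expSin c k m x)
      = (d * k ^ 2 + α ^ 2 / (4 * d)) * expCos c k m x := by
  subst hc
  field_simp
  ring

end SpatialFactor

section HalfWave

variable {a b : ℝ}

lemma expCos_left_eq_zero (h : a ≠ b) (c : ℝ) : expCos c (π / (b - a)) ((a + b) / 2) a = 0 := by
  have harg : π / (b - a) * (a - (a + b) / 2) = -(π / 2) := by
    field_simp [sub_ne_zero.2 h.symm]
    ring
  simp only [expCos, harg, cos_neg, cos_pi_div_two, mul_zero]

lemma expCos_right_eq_zero (h : a ≠ b) (c : ℝ) : expCos c (π / (b - a)) ((a + b) / 2) b = 0 := by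
  have harg : π / (b - a) * (b - (a + b) / 2) = π / 2 := by
    field_simp [sub_ne_zero.2 h.symm]
    ring
  simp only [expCos, harg, cos_pi_div_two, mul_zero]

lemma expCos_pos {x : ℝ} (hx : x ∈ Set.Ioo a b) (c : ℝ) :
    0 < expCos c (π / (b - a)) ((a + b) / 2) x := by
  have hba : 0 < b - a := sub_pos.2 (hx.1.trans hx.2)
  have harg : π / (b - a) * (x - (a + b) / 2) = π * ((x - a) / (b - a)) - π / 2 := by
    field_simp
    ring
  have hfrac : (x - a) / (b - a) ∈ Set.Ioo 0 1 :=
    ⟨div_pos (by linarith [hx.1]) hba, (div_lt_one hba).2 (by linarith [hx.2])⟩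
  refine mul_pos (exp_pos _) (cos_pos_of_mem_Ioo ⟨?_, ?_⟩) <;> rw [harg] <;>
    nlinarith [pi_pos, hfrac.1, hfrac.2]

end HalfWave

section TimeFactor

variable {f : ℝ → ℝ} {T : ℝ}

lemma hasDerivAt_exp_integral (hf : Continuous f) (t : ℝ) :
    HasDerivAt (fun t => exp (∫ s in 0..t, f s)) (exp (∫ s in 0..t, f s) * f t) t :=
  (hf.integral_hasStrictDerivAt 0 t).hasDerivAt.exp

lemma Function.Periodic.primitive_of_integral_eq_zero (hper : Periodic f T)
    (hf : ∀ a b, IntervalIntegrable f MeasureTheory.volume a b) (h0 : ∫ s in 0..T, f s = 0) :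
    Periodic (fun t => ∫ s in 0..t, f s) T := fun t => by
  simp only [hper.intervalIntegral_add_eq_add 0 t hf, zero_add, h0, add_zero]

lemma integral_neg_sub_add_div_eq_zero {β γ : ℝ → ℝ} {c μ : ℝ}
    (hβ : IntervalIntegrable β MeasureTheory.volume 0 T)
    (hγ : IntervalIntegrable γ MeasureTheory.volume 0 T) (hT : T ≠ 0) (hμ : μ ≠ 0)
    (h : μ * (c + (1 / T) * ∫ s in 0..T, γ s) = (1 / T) * ∫ s in 0..T, β s) :
    ∫ s in 0..T, (-γ s - c + β s / μ) = 0 := by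
  rw [integral_add (f := fun s => -γ s - c) (hγ.neg.sub intervalIntegrable_const)
      (hβ.div_const μ), integral_sub (f := fun s => -γ s) hγ.neg intervalIntegrable_const,
    integral_neg, integral_const, integral_div]
  field_simp at h ⊢
  simp only [sub_zero, smul_eq_mul]
  linear_combination -h

end TimeFactor

theorem explicit_periodic_eigenfunction_general
    (d α T h1 h2 : ℝ) (β γ : ℝ → ℝ)
    (hd : 0 < d) (hT : 0 < T) (hh : h1 < h2)
    (hβc : Continuous β) (hγc : Continuous γ)
    (hβper : ∀ t, β (t + T) = β t) (hγper : ∀ t, γ (t + T) = γ t)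
    (hβpos : ∀ t, 0 < β t) (hγpos : ∀ t, 0 < γ t)
    (L μstar : ℝ) (hL : L = h2 - h1)
    (hμ : μstar = ((1 / T) * ∫ t in (0:ℝ)..T, β t) /
      (d * (Real.pi / L) ^ 2 + α ^ 2 / (4 * d) + (1 / T) * ∫ t in (0:ℝ)..T, γ t))
    (u : ℝ → ℝ → ℝ)
    (hu : ∀ x t, u x t =
      Real.exp (∫ s in (0:ℝ)..t,
          (-γ s - d * (Real.pi / L) ^ 2 - α ^ 2 / (4 * d) + β s / μstar)) *
        Real.exp (α * x / (2 * d)) *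
        Real.cos ((Real.pi / L) * (x - (h1 + h2) / 2))) :
    0 < μstar ∧
    -- (a) the PDE
    (∀ x ∈ Set.Ioo h1 h2, ∀ t : ℝ,
      pT u x t - d * pXX u x t + α * pX u x t
        = -γ t * u x t + (β t / μstar) * u x t) ∧
    -- (b) Dirichlet boundary conditions
    (∀ t : ℝ, u h1 t = 0 ∧ u h2 t = 0) ∧
    -- (c) T-periodicity
    (∀ x t : ℝ, u x (t + T) = u x t) ∧
    -- (d) positivity
    (∀ x ∈ Set.Ioo h1 h2, ∀ t : ℝ, 0 < u x t) := by
  subst hL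
  set ω := d * (π / (h2 - h1)) ^ 2 + α ^ 2 / (4 * d)
  have hIβ := intervalIntegral_pos_of_pos (hβc.intervalIntegrable 0 T) hβpos hT
  have hIγ := intervalIntegral_pos_of_pos (hγc.intervalIntegrable 0 T) hγpos hT
  have hk : 0 < π / (h2 - h1) := div_pos pi_pos (sub_pos.2 hh)
  have hD : 0 < ω + (1 / T) * ∫ t in 0..T, γ t := by positivity
  have hμpos : 0 < μstar := hμ ▸ div_pos (by positivity) hD
  set f := fun s => -γ s - ω + β s / μstar
  have hf : Continuous f := by fun_prop
  have hfper : Periodic f T := fun s => by simp only [f, hβper, hγper]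
  have hmean : ∫ s in 0..T, f s = 0 :=
    integral_neg_sub_add_div_eq_zero (hβc.intervalIntegrable 0 T) (hγc.intervalIntegrable 0 T)
      hT.ne' hμpos.ne' (by rw [hμ, div_mul_cancel₀ _ hD.ne'])
  set X := expCos (α / (2 * d)) (π / (h2 - h1)) ((h1 + h2) / 2)
  obtain rfl : u = fun x t => exp (∫ s in 0..t, f s) * X x := by
    funext x t
    rw [hu, mul_assoc, mul_div_right_comm]
    simp only [X, expCos, f, ω, sub_sub]
  refine ⟨hμpos, fun x _ t => ?_, fun t => ?_, fun x t => ?_, fun x hx t => ?_⟩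
  · rw [pT_sub_pXX_add_pX_of_separable (hasDerivAt_exp_integral hf) (hasDerivAt_expCos _ _ _)
      (hasDerivAt_deriv_expCos _ _ _) (drift_diffusion_expCos _ _ _ hd.ne' (by field_simp))]
    simp only [f]
    ring
  · simp only [X, expCos_left_eq_zero hh.ne, expCos_right_eq_zero hh.ne, mul_zero, and_self]
  · simp only [(hfper.primitive_of_integral_eq_zero (fun a b => hf.intervalIntegrable a b)
      hmean) t]
  · exact mul_pos (exp_pos _) (expCos_pos hx _)

/-- **Theorem 3.2(i), explicit eigenfunction.** In the spatially homogeneous time-periodic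
case, the explicit function
`u(x,t) = exp(∫₀ᵗ(−γ−d(π/L)²−α²/(4d)+β/μ*)) · e^{αx/(2d)} · cos((π/L)(x−(h1+h2)/2))`
is a positive T-periodic solution of the periodic-parabolic eigenvalue problem with
eigenvalue parameter `μ* = ((1/T)∫₀ᵀβ)/(d(π/L)² + α²/(4d) + (1/T)∫₀ᵀγ)`. -/
theorem explicit_periodic_eigenfunction
    (d α T h1 h2 : ℝ) (β γ : ℝ → ℝ)
    (hd : 0 < d) (hα : 0 ≤ α) (hT : 0 < T) (hh : h1 < h2)
    (hβc : Continuous β) (hγc : Continuous γ)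
    (hβper : ∀ t, β (t + T) = β t) (hγper : ∀ t, γ (t + T) = γ t)
    (hβpos : ∀ t, 0 < β t) (hγpos : ∀ t, 0 < γ t)
    (L μstar : ℝ) (hL : L = h2 - h1)
    (hμ : μstar = ((1 / T) * ∫ t in (0:ℝ)..T, β t) /
      (d * (Real.pi / L) ^ 2 + α ^ 2 / (4 * d) + (1 / T) * ∫ t in (0:ℝ)..T, γ t))
    (u : ℝ → ℝ → ℝ)
    (hu : ∀ x t, u x t =
      Real.exp (∫ s in (0:ℝ)..t,
          (-γ s - d * (Real.pi / L) ^ 2 - α ^ 2 / (4 * d) + β s / μstar)) *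
        Real.exp (α * x / (2 * d)) *
        Real.cos ((Real.pi / L) * (x - (h1 + h2) / 2))) :
    0 < μstar ∧
    -- (a) the PDE
    (∀ x ∈ Set.Ioo h1 h2, ∀ t : ℝ,
      pT u x t - d * pXX u x t + α * pX u x t
        = -γ t * u x t + (β t / μstar) * u x t) ∧
    -- (b) Dirichlet boundary conditions
    (∀ t : ℝ, u h1 t = 0 ∧ u h2 t = 0) ∧
    -- (c) T-periodicity
    (∀ x t : ℝ, u x (t + T) = u x t) ∧
    -- (d) positivity
    (∀ x ∈ Set.Ioo h1 h2, ∀ t : ℝ, 0 < u x t) :=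
  explicit_periodic_eigenfunction_general d α T h1 h2 β γ hd hT hh hβc hγc hβper hγper hβpos hγpos L
    μstar hL hμ u hu
end

section
/- Let d>0, α∈ℝ, T>0, h1<h2, and let β1,β2,γ1,γ2:[h1,h2]×ℝ→ℝ be continuous and T-periodic in t. Let μ1,μ2>0 and let φ,ψ:[h1,h2]×ℝ→ℝ be T-periodic in t, continuous together with φ_t,φ_x,φ_xx and ψ_t,ψ_x,ψ_xx (the spatial derivatives being continuous up to x=h1 and x=h2), with φ(h1,t)=φ(h2,t)=ψ(h1,t)=ψ(h2,t)=0 and φ>0, ψ>0 on (h1,h2)×ℝ, satisfying φ_t−dφ_xx+αφ_x=−γ1φ+(β1/μ1)φ and −ψ_t−dψ_xx−αψ_x=−γ2ψ+(β2/μ2)ψ on (h1,h2)×ℝ. Then ∫_0^T∫_{h1}^{h2}((β1/μ1)−(β2/μ2)+γ2−γ1)·φψ dx dt = 0; equivalently, (1/μ1)∫_0^T∫_{h1}^{h2}β1φψ dx dt − (1/μ2)∫_0^T∫_{h1}^{h2}β2φψ dx dt = ∫_0^T∫_{h1}^{h2}(γ1−γ2)φψ dx dt. Consequently, if β1(x,t)≤β2(x,t)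 and γ1(x,t)≥γ2(x,t) for all (x,t), and β1>0 on (h1,h2)×ℝ, then μ1≤μ2. -/
/-!
Multiplying the equation for `φ` by `ψ`, the adjoint equation for `ψ` by `φ` and subtracting
gives `((β1/μ1) − (β2/μ2) + γ2 − γ1) φψ = ∂ₜ(φψ) − ∂ₓJ` with the Lagrange flux
`J = d (ψ φₓ − φ ψₓ) − α φψ`. Over one period the time derivative integrates to zero by
periodicity, and over `[h1, h2]` the flux term does by the Dirichlet condition. If `β1 ≤ β2`,
`γ1 ≥ γ2` and `μ2 < μ1`, the integrand would be strictly negative inside, contradicting the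
identity.
-/

open MeasureTheory Set Function intervalIntegral

section StripIntegrals

variable {E : Type*} [NormedAddCommGroup E] {a b c d : ℝ} {f g : ℝ → ℝ → E}

theorem ContinuousOn.intervalIntegrable_uncurry_right (hab : a ≤ b)
    (hf : ContinuousOn (uncurry f) (Icc a b ×ˢ univ)) (t : ℝ) :
    IntervalIntegrable (fun x => f x t) volume a b :=
  ((uIcc_of_le hab).symm ▸ hf.uncurry_right t (mem_univ t)).intervalIntegrable

variable [NormedSpace ℝ E]

theorem ContinuousOn.continuous_intervalIntegral_uncurry (hab : a ≤ b)
    (hf : ContinuousOn (uncurry f) (Icc a b ×ˢ univ)) :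
    Continuous fun t => ∫ x in a..b, f x t := by
  set F : ℝ → ℝ → E := fun t x => f (projIcc a b hab x) t
  -- clamping the space variable to `[a, b]` extends `f` continuously to the whole plane
  have hF : Continuous (uncurry F) :=
    hf.comp_continuous (f := fun p : ℝ × ℝ => ((projIcc a b hab p.2 : ℝ), p.1))
      (by fun_prop) fun _ => ⟨Subtype.mem _, mem_univ _⟩
  refine (continuous_parametric_intervalIntegral_of_continuous' (μ := volume) hF a b).congr
    fun t => ?_
  refine integral_congr fun x hx => ?_
  rw [uIcc_of_le hab] at hx
  simp only [F, projIcc_of_mem hab hx]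

theorem ContinuousOn.intervalIntegral_integral_swap (hab : a ≤ b)
    (hf : ContinuousOn (uncurry f) (Icc a b ×ˢ univ)) :
    ∫ t in c..d, ∫ x in a..b, f x t = ∫ x in a..b, ∫ t in c..d, f x t := by
  apply intervalIntegral_intervalIntegral_swap
  have hcont : ContinuousOn (uncurry f ∘ Prod.swap) (uIcc c d ×ˢ Icc a b) :=
    hf.comp continuous_swap.continuousOn fun _ hp => ⟨hp.2, mem_univ _⟩
  refine (hcont.integrableOn_compact (isCompact_uIcc.prod isCompact_Icc)).mono_set ?_
  exact prod_mono uIoc_subset_uIcc ((uIoc_of_le hab).trans_subset Ioc_subset_Icc_self)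

theorem ContinuousOn.intervalIntegral_integral_sub (hab : a ≤ b)
    (hf : ContinuousOn (uncurry f) (Icc a b ×ˢ univ))
    (hg : ContinuousOn (uncurry g) (Icc a b ×ˢ univ)) :
    ∫ t in c..d, ∫ x in a..b, (f x t - g x t)
      = (∫ t in c..d, ∫ x in a..b, f x t) - ∫ t in c..d, ∫ x in a..b, g x t := by
  simp only [integral_sub (hf.intervalIntegrable_uncurry_right hab _)
    (hg.intervalIntegrable_uncurry_right hab _)]
  exact integral_sub ((hf.continuous_intervalIntegral_uncurry hab).intervalIntegrable _ _)
    ((hg.continuous_intervalIntegral_uncurry hab).intervalIntegrable _ _)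

variable [CompleteSpace E]

theorem intervalIntegral_integral_eq_zero_of_eq_deriv_sub_deriv {T : ℝ} (hab : a ≤ b)
    {G P Q P' Q' : ℝ → ℝ → E}
    (hP' : ContinuousOn (uncurry P') (Icc a b ×ˢ univ))
    (hQ' : ContinuousOn (uncurry Q') (Icc a b ×ˢ univ))
    (hP : ∀ x ∈ Icc a b, ∀ t, HasDerivAt (P x ·) (P' x t) t)
    (hQ : ∀ t, ∀ x ∈ Icc a b, HasDerivAt (Q · t) (Q' x t) x)
    (hP_periodic : ∀ x ∈ Icc a b, P x T = P x 0) (hQ_boundary : ∀ t, Q b t = Q a t)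
    (hG : ∀ t, ∀ x ∈ Ioo a b, G x t = P' x t - Q' x t) :
    ∫ t in (0 : ℝ)..T, ∫ x in a..b, G x t = 0 := by
  have hflux : ∀ t, ∫ x in a..b, Q' x t = 0 := fun t => by
    rw [integral_eq_sub_of_hasDerivAt (fun x hx => hQ t x (uIcc_of_le hab ▸ hx))
      (hQ'.intervalIntegrable_uncurry_right hab t), hQ_boundary, sub_self]
  have hslice : ∀ t, ∫ x in a..b, G x t = ∫ x in a..b, P' x t := fun t => by
    rw [integral_congr_uIoo fun x hx => hG t x (uIoo_of_le hab ▸ hx),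
      integral_sub (hP'.intervalIntegrable_uncurry_right hab t)
        (hQ'.intervalIntegrable_uncurry_right hab t), hflux, sub_zero]
  have hperiod : ∀ x ∈ uIcc a b, ∫ t in (0 : ℝ)..T, P' x t = 0 := fun x hx => by
    rw [uIcc_of_le hab] at hx
    rw [integral_eq_sub_of_hasDerivAt (fun t _ => hP x hx t)
      ((continuousOn_univ.1 (hP'.uncurry_left x hx)).intervalIntegrable _ _),
      hP_periodic x hx, sub_self]
  simp only [hslice]
  rw [hP'.intervalIntegral_integral_swap hab, integral_congr hperiod,
    intervalIntegral.integral_zero]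

end StripIntegrals

theorem ContinuousOn.intervalIntegral_integral_pos {a b c d : ℝ} {f : ℝ → ℝ → ℝ}
    (hab : a < b) (hcd : c < d)
    (hf : ContinuousOn (uncurry f) (Icc a b ×ˢ univ))
    (hpos : ∀ t, ∀ x ∈ Ioo a b, 0 < f x t) :
    0 < ∫ t in c..d, ∫ x in a..b, f x t :=
  intervalIntegral_pos_of_pos_on
    ((hf.continuous_intervalIntegral_uncurry hab.le).intervalIntegrable _ _)
    (fun t _ => intervalIntegral_pos_of_pos_on (hf.intervalIntegrable_uncurry_right hab.le t)
      (hpos t) hab) hcd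

theorem hasDerivAt_lagrange_flux {φ ψ : ℝ → ℝ → ℝ} {x t : ℝ} (d α : ℝ)
    (hφ : DifferentiableAt ℝ (φ · t) x) (hφx : DifferentiableAt ℝ (pX φ · t) x)
    (hψ : DifferentiableAt ℝ (ψ · t) x) (hψx : DifferentiableAt ℝ (pX ψ · t) x) :
    HasDerivAt (fun y => d * (ψ y t * pX φ y t - φ y t * pX ψ y t) - α * (φ y t * ψ y t))
      (d * (ψ x t * pXX φ x t - φ x t * pXX ψ x t)
        - α * (pX φ x t * ψ x t + φ x t * pX ψ x t)) x := by
  have h := (((hψ.hasDerivAt.mul hφx.hasDerivAt).sub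
    (hφ.hasDerivAt.mul hψx.hasDerivAt)).const_mul d).sub
    ((hφ.hasDerivAt.mul hψ.hasDerivAt).const_mul α)
  exact h.congr_deriv (by simp only [pX, pXX]; ring)

theorem div_sub_div_add_sub_neg {μ₁ μ₂ b₁ b₂ g₁ g₂ : ℝ} (hμ₂ : 0 < μ₂) (hμ : μ₂ < μ₁)
    (hb₁ : 0 < b₁) (hb : b₁ ≤ b₂) (hg : g₂ ≤ g₁) : b₁ / μ₁ - b₂ / μ₂ + g₂ - g₁ < 0 := by
  have hμ_lt : b₁ / μ₁ < b₁ / μ₂ := div_lt_div_of_pos_left hb₁ hμ₂ hμ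
  have hb_le : b₁ / μ₂ ≤ b₂ / μ₂ := by gcongr
  linarith

theorem periodic_parabolic_monotone_identity_general
    (d α T h1 h2 : ℝ) (hT : 0 < T) (hh : h1 < h2)
    (β1 β2 γ1 γ2 : ℝ → ℝ → ℝ)
    (hβ1c : ContinuousOn (fun p : ℝ × ℝ => β1 p.1 p.2) (Set.Icc h1 h2 ×ˢ Set.univ))
    (hβ2c : ContinuousOn (fun p : ℝ × ℝ => β2 p.1 p.2) (Set.Icc h1 h2 ×ˢ Set.univ))
    (hγ1c : ContinuousOn (fun p : ℝ × ℝ => γ1 p.1 p.2) (Set.Icc h1 h2 ×ˢ Set.univ))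
    (hγ2c : ContinuousOn (fun p : ℝ × ℝ => γ2 p.1 p.2) (Set.Icc h1 h2 ×ˢ Set.univ))
    (μ1 μ2 : ℝ) (hμ2 : 0 < μ2)
    (φ ψ : ℝ → ℝ → ℝ)
    -- regularity of φ : C^{2,1}, spatial derivatives continuous up to the boundary
    (hφper : ∀ x t, φ x (t + T) = φ x t)
    (hφc : ContinuousOn (fun p : ℝ × ℝ => φ p.1 p.2) (Set.Icc h1 h2 ×ˢ Set.univ))
    (hφxc : ContinuousOn (fun p : ℝ × ℝ => pX φ p.1 p.2) (Set.Icc h1 h2 ×ˢ Set.univ))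
    (hφxxc : ContinuousOn (fun p : ℝ × ℝ => pXX φ p.1 p.2) (Set.Icc h1 h2 ×ˢ Set.univ))
    (hφtc : ContinuousOn (fun p : ℝ × ℝ => pT φ p.1 p.2) (Set.Icc h1 h2 ×ˢ Set.univ))
    (hφdiff : ∀ t : ℝ, ∀ x ∈ Set.Icc h1 h2,
      DifferentiableAt ℝ (fun y => φ y t) x ∧
      DifferentiableAt ℝ (fun y => pX φ y t) x ∧
      DifferentiableAt ℝ (fun s => φ x s) t)
    -- regularity of ψ
    (hψper : ∀ x t, ψ x (t + T) = ψ x t)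
    (hψc : ContinuousOn (fun p : ℝ × ℝ => ψ p.1 p.2) (Set.Icc h1 h2 ×ˢ Set.univ))
    (hψxc : ContinuousOn (fun p : ℝ × ℝ => pX ψ p.1 p.2) (Set.Icc h1 h2 ×ˢ Set.univ))
    (hψxxc : ContinuousOn (fun p : ℝ × ℝ => pXX ψ p.1 p.2) (Set.Icc h1 h2 ×ˢ Set.univ))
    (hψtc : ContinuousOn (fun p : ℝ × ℝ => pT ψ p.1 p.2) (Set.Icc h1 h2 ×ˢ Set.univ))
    (hψdiff : ∀ t : ℝ, ∀ x ∈ Set.Icc h1 h2,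
      DifferentiableAt ℝ (fun y => ψ y t) x ∧
      DifferentiableAt ℝ (fun y => pX ψ y t) x ∧
      DifferentiableAt ℝ (fun s => ψ x s) t)
    -- boundary conditions and positivity
    (hφbc : ∀ t : ℝ, φ h1 t = 0 ∧ φ h2 t = 0)
    (hψbc : ∀ t : ℝ, ψ h1 t = 0 ∧ ψ h2 t = 0)
    (hφpos : ∀ t : ℝ, ∀ x ∈ Set.Ioo h1 h2, 0 < φ x t)
    (hψpos : ∀ t : ℝ, ∀ x ∈ Set.Ioo h1 h2, 0 < ψ x t)
    -- the two PDEs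
    (hφpde : ∀ t : ℝ, ∀ x ∈ Set.Ioo h1 h2,
      pT φ x t - d * pXX φ x t + α * pX φ x t
        = -γ1 x t * φ x t + (β1 x t / μ1) * φ x t)
    (hψpde : ∀ t : ℝ, ∀ x ∈ Set.Ioo h1 h2,
      -pT ψ x t - d * pXX ψ x t - α * pX ψ x t
        = -γ2 x t * ψ x t + (β2 x t / μ2) * ψ x t) :
    -- the multiply–subtract–integrate identity
    (∫ t in (0:ℝ)..T, ∫ x in h1..h2,
        ((β1 x t / μ1) - (β2 x t / μ2) + γ2 x t - γ1 x t) * (φ x t * ψ x t)) = 0 ∧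
    -- equivalent form
    (1 / μ1) * (∫ t in (0:ℝ)..T, ∫ x in h1..h2, β1 x t * (φ x t * ψ x t))
      - (1 / μ2) * (∫ t in (0:ℝ)..T, ∫ x in h1..h2, β2 x t * (φ x t * ψ x t))
      = (∫ t in (0:ℝ)..T, ∫ x in h1..h2, (γ1 x t - γ2 x t) * (φ x t * ψ x t)) ∧
    -- consequence: monotonicity of the principal eigenvalue
    ((∀ t : ℝ, ∀ x ∈ Set.Icc h1 h2, β1 x t ≤ β2 x t ∧ γ2 x t ≤ γ1 x t) →
      (∀ t : ℝ, ∀ x ∈ Set.Ioo h1 h2, 0 < β1 x t) → μ1 ≤ μ2) := by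
  have hzero : (∫ t in (0:ℝ)..T, ∫ x in h1..h2,
      ((β1 x t / μ1) - (β2 x t / μ2) + γ2 x t - γ1 x t) * (φ x t * ψ x t)) = 0 := by
    refine intervalIntegral_integral_eq_zero_of_eq_deriv_sub_deriv hh.le
      (P := fun x t => φ x t * ψ x t)
      (Q := fun x t => d * (ψ x t * pX φ x t - φ x t * pX ψ x t) - α * (φ x t * ψ x t))
      (P' := fun x t => pT φ x t * ψ x t + φ x t * pT ψ x t)
      (Q' := fun x t => d * (ψ x t * pXX φ x t - φ x t * pXX ψ x t)
        - α * (pX φ x t * ψ x t + φ x t * pX ψ x t))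
      (by fun_prop) (by fun_prop)
      (fun x hx t => (hφdiff t x hx).2.2.hasDerivAt.mul (hψdiff t x hx).2.2.hasDerivAt)
      (fun t x hx => ?_) (fun x _ => ?_) (fun t => ?_) (fun t x hx => ?_)
    · obtain ⟨hφ, hφx, -⟩ := hφdiff t x hx
      obtain ⟨hψ, hψx, -⟩ := hψdiff t x hx
      exact hasDerivAt_lagrange_flux d α hφ hφx hψ hψx
    · simpa using congr($(hφper x 0) * $(hψper x 0))
    · simp [hφbc, hψbc]
    · linear_combination φ x t * hψpde t x hx - ψ x t * hφpde t x hx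
  refine ⟨hzero, ?_, fun hle hβ1pos => ?_⟩
  · have hβ := ContinuousOn.intervalIntegral_integral_sub (c := 0) (d := T) hh.le
      (f := fun x t => 1 / μ1 * (β1 x t * (φ x t * ψ x t)))
      (g := fun x t => 1 / μ2 * (β2 x t * (φ x t * ψ x t))) (by fun_prop) (by fun_prop)
    have hβγ := ContinuousOn.intervalIntegral_integral_sub (c := 0) (d := T) hh.le
      (f := fun x t => 1 / μ1 * (β1 x t * (φ x t * ψ x t)) - 1 / μ2 * (β2 x t * (φ x t * ψ x t)))
      (g := fun x t => (γ1 x t - γ2 x t) * (φ x t * ψ x t)) (by fun_prop) (by fun_prop)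
    simp only [hβ, intervalIntegral.integral_const_mul] at hβγ
    rw [← sub_eq_zero, ← hβγ, ← hzero]
    congr! 4 with t x
    ring
  · by_contra! hμ
    have hcoef : ∀ t, ∀ x ∈ Ioo h1 h2, β1 x t / μ1 - β2 x t / μ2 + γ2 x t - γ1 x t < 0 :=
      fun t x hx => div_sub_div_add_sub_neg hμ2 hμ (hβ1pos t x hx)
        (hle t x (Ioo_subset_Icc_self hx)).1 (hle t x (Ioo_subset_Icc_self hx)).2
    have hpos := ContinuousOn.intervalIntegral_integral_pos hh hT (by fun_prop)
      (f := fun x t => -(((β1 x t / μ1) - (β2 x t / μ2) + γ2 x t - γ1 x t) * (φ x t * ψ x t)))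
      fun t x hx => neg_pos.2 <|
        mul_neg_of_neg_of_pos (hcoef t x hx) (mul_pos (hφpos t x hx) (hψpos t x hx))
    simp only [intervalIntegral.integral_neg, hzero, neg_zero] at hpos
    exact hpos.false

/-- **Identity from the proof of Theorem 3.4(1).** If `(μ1, φ)` is a positive T-periodic
eigenpair of the periodic-parabolic problem with coefficients `(β1, γ1)` and `(μ2, ψ)` a
positive T-periodic eigenpair of the adjoint problem with coefficients `(β2, γ2)`, then
`∫₀ᵀ∫ ((β1/μ1) − (β2/μ2) + γ2 − γ1)φψ = 0`; consequently `β1 ≤ β2`, `γ1 ≥ γ2` force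
`μ1 ≤ μ2`. -/
theorem periodic_parabolic_monotone_identity
    (d α T h1 h2 : ℝ) (hd : 0 < d) (hT : 0 < T) (hh : h1 < h2)
    (β1 β2 γ1 γ2 : ℝ → ℝ → ℝ)
    (hβ1c : ContinuousOn (fun p : ℝ × ℝ => β1 p.1 p.2) (Set.Icc h1 h2 ×ˢ Set.univ))
    (hβ2c : ContinuousOn (fun p : ℝ × ℝ => β2 p.1 p.2) (Set.Icc h1 h2 ×ˢ Set.univ))
    (hγ1c : ContinuousOn (fun p : ℝ × ℝ => γ1 p.1 p.2) (Set.Icc h1 h2 ×ˢ Set.univ))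
    (hγ2c : ContinuousOn (fun p : ℝ × ℝ => γ2 p.1 p.2) (Set.Icc h1 h2 ×ˢ Set.univ))
    (hβ1per : ∀ x t, β1 x (t + T) = β1 x t) (hβ2per : ∀ x t, β2 x (t + T) = β2 x t)
    (hγ1per : ∀ x t, γ1 x (t + T) = γ1 x t) (hγ2per : ∀ x t, γ2 x (t + T) = γ2 x t)
    (μ1 μ2 : ℝ) (hμ1 : 0 < μ1) (hμ2 : 0 < μ2)
    (φ ψ : ℝ → ℝ → ℝ)
    -- regularity of φ : C^{2,1}, spatial derivatives continuous up to the boundary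
    (hφper : ∀ x t, φ x (t + T) = φ x t)
    (hφc : ContinuousOn (fun p : ℝ × ℝ => φ p.1 p.2) (Set.Icc h1 h2 ×ˢ Set.univ))
    (hφxc : ContinuousOn (fun p : ℝ × ℝ => pX φ p.1 p.2) (Set.Icc h1 h2 ×ˢ Set.univ))
    (hφxxc : ContinuousOn (fun p : ℝ × ℝ => pXX φ p.1 p.2) (Set.Icc h1 h2 ×ˢ Set.univ))
    (hφtc : ContinuousOn (fun p : ℝ × ℝ => pT φ p.1 p.2) (Set.Icc h1 h2 ×ˢ Set.univ))
    (hφdiff : ∀ t : ℝ, ∀ x ∈ Set.Icc h1 h2,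
      DifferentiableAt ℝ (fun y => φ y t) x ∧
      DifferentiableAt ℝ (fun y => pX φ y t) x ∧
      DifferentiableAt ℝ (fun s => φ x s) t)
    -- regularity of ψ
    (hψper : ∀ x t, ψ x (t + T) = ψ x t)
    (hψc : ContinuousOn (fun p : ℝ × ℝ => ψ p.1 p.2) (Set.Icc h1 h2 ×ˢ Set.univ))
    (hψxc : ContinuousOn (fun p : ℝ × ℝ => pX ψ p.1 p.2) (Set.Icc h1 h2 ×ˢ Set.univ))
    (hψxxc : ContinuousOn (fun p : ℝ × ℝ => pXX ψ p.1 p.2) (Set.Icc h1 h2 ×ˢ Set.univ))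
    (hψtc : ContinuousOn (fun p : ℝ × ℝ => pT ψ p.1 p.2) (Set.Icc h1 h2 ×ˢ Set.univ))
    (hψdiff : ∀ t : ℝ, ∀ x ∈ Set.Icc h1 h2,
      DifferentiableAt ℝ (fun y => ψ y t) x ∧
      DifferentiableAt ℝ (fun y => pX ψ y t) x ∧
      DifferentiableAt ℝ (fun s => ψ x s) t)
    -- boundary conditions and positivity
    (hφbc : ∀ t : ℝ, φ h1 t = 0 ∧ φ h2 t = 0)
    (hψbc : ∀ t : ℝ, ψ h1 t = 0 ∧ ψ h2 t = 0)
    (hφpos : ∀ t : ℝ, ∀ x ∈ Set.Ioo h1 h2, 0 < φ x t)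
    (hψpos : ∀ t : ℝ, ∀ x ∈ Set.Ioo h1 h2, 0 < ψ x t)
    -- the two PDEs
    (hφpde : ∀ t : ℝ, ∀ x ∈ Set.Ioo h1 h2,
      pT φ x t - d * pXX φ x t + α * pX φ x t
        = -γ1 x t * φ x t + (β1 x t / μ1) * φ x t)
    (hψpde : ∀ t : ℝ, ∀ x ∈ Set.Ioo h1 h2,
      -pT ψ x t - d * pXX ψ x t - α * pX ψ x t
        = -γ2 x t * ψ x t + (β2 x t / μ2) * ψ x t) :
    -- the multiply–subtract–integrate identity
    (∫ t in (0:ℝ)..T, ∫ x in h1..h2,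
        ((β1 x t / μ1) - (β2 x t / μ2) + γ2 x t - γ1 x t) * (φ x t * ψ x t)) = 0 ∧
    -- equivalent form
    (1 / μ1) * (∫ t in (0:ℝ)..T, ∫ x in h1..h2, β1 x t * (φ x t * ψ x t))
      - (1 / μ2) * (∫ t in (0:ℝ)..T, ∫ x in h1..h2, β2 x t * (φ x t * ψ x t))
      = (∫ t in (0:ℝ)..T, ∫ x in h1..h2, (γ1 x t - γ2 x t) * (φ x t * ψ x t)) ∧
    -- consequence: monotonicity of the principal eigenvalue
    ((∀ t : ℝ, ∀ x ∈ Set.Icc h1 h2, β1 x t ≤ β2 x t ∧ γ2 x t ≤ γ1 x t) →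
      (∀ t : ℝ, ∀ x ∈ Set.Ioo h1 h2, 0 < β1 x t) → μ1 ≤ μ2) :=
  periodic_parabolic_monotone_identity_general d α T h1 h2 hT hh β1 β2 γ1 γ2 hβ1c hβ2c hγ1c hγ2c μ1
    μ2 hμ2 φ ψ hφper hφc hφxc hφxxc hφtc hφdiff hψper hψc hψxc hψxxc hψtc hψdiff hφbc hψbc hφpos
    hψpos hφpde hψpde
end

section
/- Let d>0, α∈ℝ, T>0, 0<l1<l2, and let β,γ:[0,l2]×ℝ→ℝ be continuous and T-periodic in t with β>0. Let μ1,μ2>0, let φ:[0,l1]×ℝ→ℝ be T-periodic in t, continuous together with φ_t,φ_x,φ_xx (φ_x continuous up to the boundary), with φ(0,t)=φ(l1,t)=0, φ>0 on (0,l1)×ℝ, satisfying φ_t−dφ_xx+αφ_x=−γφ+(β/μ1)φ on (0,l1)×ℝ; and let ψ:[0,l2]×ℝ→ℝ be T-periodic in t, continuous together with ψ_t,ψ_x,ψ_xx, with ψ(0,t)=ψ(l2,t)=0, ψ>0 on (0,l2)×ℝ, satisfying −ψ_t−dψ_xx−αψ_x=−γψ+(β/μ2)ψ on (0,l2)×ℝ.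 Then (1/μ1−1/μ2)·∫_0^T∫_0^{l1}β(x,t)φ(x,t)ψ(x,t)dx dt = −d·∫_0^Tψ(l1,t)·φ_x(l1,t)dt. If moreover φ_x(l1,t)<0 for all t (Hopf boundary-point inequality), then μ1<μ2. -/
open Set Function MeasureTheory intervalIntegral

section Fubini

variable {E : Type*} [NormedAddCommGroup E] {F : ℝ → ℝ → E} {a b c d : ℝ}

theorem ContinuousOn.integrableOn_uIoc_prod
    (hF : ContinuousOn (uncurry F) (uIcc a b ×ˢ uIcc c d)) :
    IntegrableOn (uncurry F) (uIoc a b ×ˢ uIoc c d) :=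
  (hF.integrableOn_compact (isCompact_uIcc.prod isCompact_uIcc)).mono_set
    (prod_mono uIoc_subset_uIcc uIoc_subset_uIcc)

theorem IntegrableOn.intervalIntegrable_intervalIntegral_left [NormedSpace ℝ E]
    (hF : IntegrableOn (uncurry F) (uIoc a b ×ˢ uIoc c d)) :
    IntervalIntegrable (fun y => ∫ x in a..b, F x y) volume c d := by
  rw [IntegrableOn, Measure.volume_eq_prod, ← Measure.prod_restrict] at hF
  simp_rw [intervalIntegrable_iff, intervalIntegral_eq_integral_uIoc]
  exact hF.integral_prod_right.smul _

end Fubini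

theorem integral_integral_eq_zero_of_periodic {w w' : ℝ → ℝ → ℝ} {a b c d : ℝ}
    (hw : ∀ x ∈ uIcc a b, ∀ t ∈ uIcc c d, HasDerivAt (w x) (w' x t) t)
    (hw' : ContinuousOn (uncurry w') (uIcc a b ×ˢ uIcc c d))
    (hper : ∀ x ∈ uIcc a b, w x d = w x c) :
    ∫ t in c..d, ∫ x in a..b, w' x t = 0 := by
  have hinner : EqOn (fun x => ∫ t in c..d, w' x t) (fun _ => 0) (uIcc a b) := fun x hx =>
    (integral_eq_sub_of_hasDerivAt (hw x hx) (hw'.uncurry_left x hx).intervalIntegrable).trans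
      (sub_eq_zero_of_eq (hper x hx))
  rw [← intervalIntegral_intervalIntegral_swap hw'.integrableOn_uIoc_prod, integral_congr hinner,
    intervalIntegral.integral_zero]

theorem integral_lagrange_identity {u u₁ u₂ v v₁ v₂ : ℝ → ℝ} {a b : ℝ} (d α : ℝ)
    (hu : ∀ x ∈ uIcc a b, HasDerivAt u (u₁ x) x)
    (hu₁ : ∀ x ∈ uIcc a b, HasDerivAt u₁ (u₂ x) x)
    (hv : ∀ x ∈ uIcc a b, HasDerivAt v (v₁ x) x)
    (hv₁ : ∀ x ∈ uIcc a b, HasDerivAt v₁ (v₂ x) x)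
    (hint : IntervalIntegrable
      (fun x => (d * u₂ x - α * u₁ x) * v x - u x * (d * v₂ x + α * v₁ x)) volume a b) :
    ∫ x in a..b, ((d * u₂ x - α * u₁ x) * v x - u x * (d * v₂ x + α * v₁ x)) =
      (d * (u₁ b * v b - u b * v₁ b) - α * (u b * v b)) -
        (d * (u₁ a * v a - u a * v₁ a) - α * (u a * v a)) := by
  refine integral_eq_sub_of_hasDerivAt
    (f := fun x => d * (u₁ x * v x - u x * v₁ x) - α * (u x * v x)) (fun x hx => ?_) hint
  exact (((((hu₁ x hx).mul (hv x hx)).sub ((hu x hx).mul (hv₁ x hx))).const_mul d).sub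
    (((hu x hx).mul (hv x hx)).const_mul α)).congr_deriv (by ring)

theorem nonneg_on_Icc_of_pos_on_Ioo {f : ℝ → ℝ} {a b : ℝ}
    (hpos : ∀ x ∈ Ioo a b, 0 < f x) (ha : f a = 0) (hb : f b = 0) : ∀ x ∈ Icc a b, 0 ≤ f x := by
  intro x hx
  rcases hx.1.eq_or_lt with rfl | hax
  · exact ha.ge
  rcases hx.2.eq_or_lt with rfl | hxb
  · exact hb.ge
  exact (hpos x ⟨hax, hxb⟩).le

structure IsC21On (u : ℝ → ℝ → ℝ) (s : Set ℝ) : Prop where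
  continuousOn : ContinuousOn (uncurry u) (s ×ˢ univ)
  continuousOn_pX : ContinuousOn (uncurry (pX u)) (s ×ˢ univ)
  continuousOn_pXX : ContinuousOn (uncurry (pXX u)) (s ×ˢ univ)
  continuousOn_pT : ContinuousOn (uncurry (pT u)) (s ×ˢ univ)
  differentiableAt : ∀ t, ∀ x ∈ s, DifferentiableAt ℝ (fun y => u y t) x ∧
    DifferentiableAt ℝ (fun y => pX u y t) x ∧ DifferentiableAt ℝ (fun s => u x s) t

namespace IsC21On

variable {u : ℝ → ℝ → ℝ} {s : Set ℝ}

theorem mono {s' : Set ℝ} (hu : IsC21On u s') (hs : s ⊆ s') : IsC21On u s where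
  continuousOn := hu.continuousOn.mono (prod_mono hs subset_rfl)
  continuousOn_pX := hu.continuousOn_pX.mono (prod_mono hs subset_rfl)
  continuousOn_pXX := hu.continuousOn_pXX.mono (prod_mono hs subset_rfl)
  continuousOn_pT := hu.continuousOn_pT.mono (prod_mono hs subset_rfl)
  differentiableAt t x hx := hu.differentiableAt t x (hs hx)

theorem hasDerivAt_x (hu : IsC21On u s) (t : ℝ) :
    ∀ x ∈ s, HasDerivAt (fun y => u y t) (pX u x t) x := fun x hx =>
  (hu.differentiableAt t x hx).1.hasDerivAt

theorem hasDerivAt_pX (hu : IsC21On u s) (t : ℝ) :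
    ∀ x ∈ s, HasDerivAt (fun y => pX u y t) (pXX u x t) x := fun x hx =>
  (hu.differentiableAt t x hx).2.1.hasDerivAt

theorem hasDerivAt_t (hu : IsC21On u s) (t : ℝ) :
    ∀ x ∈ s, HasDerivAt (u x) (pT u x t) t := fun x hx =>
  (hu.differentiableAt t x hx).2.2.hasDerivAt

end IsC21On

section Eigenpairs

variable {d α μ1 μ2 l : ℝ} {β γ φ ψ : ℝ → ℝ → ℝ}

theorem integral_pT_mul_add_mul_pT_eq (t : ℝ) (hl : 0 ≤ l)
    (hφ : IsC21On φ (Icc 0 l)) (hψ : IsC21On ψ (Icc 0 l))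
    (hβ : ContinuousOn (uncurry β) (Icc 0 l ×ˢ univ))
    (hφ0 : φ 0 t = 0) (hφl : φ l t = 0) (hψ0 : ψ 0 t = 0)
    (hφpde : ∀ x ∈ Ioo 0 l, pT φ x t - d * pXX φ x t + α * pX φ x t
      = -γ x t * φ x t + (β x t / μ1) * φ x t)
    (hψpde : ∀ x ∈ Ioo 0 l, -pT ψ x t - d * pXX ψ x t - α * pX ψ x t
      = -γ x t * ψ x t + (β x t / μ2) * ψ x t) :
    ∫ x in 0..l, (pT φ x t * ψ x t + φ x t * pT ψ x t) = d * (ψ l t * pX φ l t) +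
      (1 / μ1 - 1 / μ2) * ∫ x in 0..l, β x t * (φ x t * ψ x t) := by
  have hpointwise : EqOn (fun x => pT φ x t * ψ x t + φ x t * pT ψ x t)
      (fun x => ((d * pXX φ x t - α * pX φ x t) * ψ x t
        - φ x t * (d * pXX ψ x t + α * pX ψ x t))
        + (1 / μ1 - 1 / μ2) * (β x t * (φ x t * ψ x t))) (Ioo 0 l) := fun x hx => by
    linear_combination ψ x t * hφpde x hx - φ x t * hψpde x hx
  rw [← uIcc_of_le hl] at hφ hψ hβ
  have hslice {u : ℝ → ℝ → ℝ} (hu : IsC21On u (uIcc 0 l)) :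
      ContinuousOn (fun x => u x t) (uIcc 0 l) ∧ ContinuousOn (fun x => pX u x t) (uIcc 0 l) ∧
        ContinuousOn (fun x => pXX u x t) (uIcc 0 l) :=
    ⟨hu.continuousOn.uncurry_right t (mem_univ t),
      hu.continuousOn_pX.uncurry_right t (mem_univ t),
      hu.continuousOn_pXX.uncurry_right t (mem_univ t)⟩
  obtain ⟨hφc, hφxc, hφxxc⟩ := hslice hφ
  obtain ⟨hψc, hψxc, hψxxc⟩ := hslice hψ
  have hβc := hβ.uncurry_right t (mem_univ t)
  have hlagrange := integral_lagrange_identity d α (hφ.hasDerivAt_x t) (hφ.hasDerivAt_pX t)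
    (hψ.hasDerivAt_x t) (hψ.hasDerivAt_pX t) (ContinuousOn.intervalIntegrable (by fun_prop))
  rw [integral_congr_Ioo_of_le hl hpointwise,
    integral_add (ContinuousOn.intervalIntegrable (by fun_prop))
      (ContinuousOn.intervalIntegrable (by fun_prop)),
    intervalIntegral.integral_const_mul, hlagrange, hφ0, hφl, hψ0]
  ring

theorem one_div_sub_one_div_mul_integral_eq_boundary_flux {T : ℝ} (hl : 0 ≤ l)
    (hφ : IsC21On φ (Icc 0 l)) (hψ : IsC21On ψ (Icc 0 l))
    (hβ : ContinuousOn (uncurry β) (Icc 0 l ×ˢ univ))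
    (hφper : ∀ x t, φ x (t + T) = φ x t) (hψper : ∀ x t, ψ x (t + T) = ψ x t)
    (hφbc : ∀ t, φ 0 t = 0 ∧ φ l t = 0) (hψ0 : ∀ t, ψ 0 t = 0)
    (hφpde : ∀ t, ∀ x ∈ Ioo 0 l, pT φ x t - d * pXX φ x t + α * pX φ x t
      = -γ x t * φ x t + (β x t / μ1) * φ x t)
    (hψpde : ∀ t, ∀ x ∈ Ioo 0 l, -pT ψ x t - d * pXX ψ x t - α * pX ψ x t
      = -γ x t * ψ x t + (β x t / μ2) * ψ x t) :
    (1 / μ1 - 1 / μ2) * (∫ t in 0..T, ∫ x in 0..l, β x t * (φ x t * ψ x t))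
      = -d * ∫ t in 0..T, ψ l t * pX φ l t := by
  have hrect {f : ℝ → ℝ → ℝ} (hf : ContinuousOn (uncurry f) (Icc 0 l ×ˢ univ)) :
      ContinuousOn (uncurry f) (uIcc 0 l ×ˢ uIcc 0 T) :=
    hf.mono (prod_mono (uIcc_of_le hl).subset (subset_univ _))
  have hperiod : ∫ t in 0..T, ∫ x in 0..l, (pT φ x t * ψ x t + φ x t * pT ψ x t) = 0 :=
    integral_integral_eq_zero_of_periodic (w := fun x t => φ x t * ψ x t)
      (fun x hx t _ => (hφ.hasDerivAt_t t x (uIcc_of_le hl ▸ hx)).mul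
        (hψ.hasDerivAt_t t x (uIcc_of_le hl ▸ hx)))
      (hrect ((hφ.continuousOn_pT.mul hψ.continuousOn).add
        (hφ.continuousOn.mul hψ.continuousOn_pT)))
      (fun x _ => by simpa using congr_arg₂ (· * ·) (hφper x 0) (hψper x 0))
  have hl_mem : l ∈ Icc 0 l := right_mem_Icc.2 hl
  have hflux : IntervalIntegrable (fun t => ψ l t * pX φ l t) volume 0 T :=
    ContinuousOn.intervalIntegrable ((hψ.continuousOn.uncurry_left l hl_mem).mul
      (hφ.continuousOn_pX.uncurry_left l hl_mem) |>.mono (subset_univ _))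
  have hweighted :
      IntervalIntegrable (fun t => ∫ x in 0..l, β x t * (φ x t * ψ x t)) volume 0 T :=
    IntegrableOn.intervalIntegrable_intervalIntegral_left <|
      ContinuousOn.integrableOn_uIoc_prod <| hrect (f := fun x t => β x t * (φ x t * ψ x t))
        (hβ.mul (hφ.continuousOn.mul hψ.continuousOn))
  simp_rw [fun t => integral_pT_mul_add_mul_pT_eq t hl hφ hψ hβ (hφbc t).1 (hφbc t).2 (hψ0 t)
    (hφpde t) (hψpde t)] at hperiod
  rw [integral_add (hflux.const_mul d) (hweighted.const_mul _),
    intervalIntegral.integral_const_mul, intervalIntegral.integral_const_mul] at hperiod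
  linear_combination hperiod

end Eigenpairs

theorem nested_interval_eigenvalue_identity_general
    (d α T l1 l2 : ℝ) (hd : 0 < d) (hT : 0 < T) (hl1 : 0 < l1) (hl12 : l1 < l2)
    (β γ : ℝ → ℝ → ℝ)
    (hβc : ContinuousOn (fun p : ℝ × ℝ => β p.1 p.2) (Set.Icc 0 l2 ×ˢ Set.univ))
    (hβpos : ∀ x ∈ Set.Icc (0:ℝ) l2, ∀ t : ℝ, 0 < β x t)
    (μ1 μ2 : ℝ) (hμ1 : 0 < μ1) (hμ2 : 0 < μ2)
    (φ ψ : ℝ → ℝ → ℝ)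
    -- regularity, periodicity, boundary data and positivity of φ on [0,l1]
    (hφper : ∀ x t, φ x (t + T) = φ x t)
    (hφc : ContinuousOn (fun p : ℝ × ℝ => φ p.1 p.2) (Set.Icc 0 l1 ×ˢ Set.univ))
    (hφxc : ContinuousOn (fun p : ℝ × ℝ => pX φ p.1 p.2) (Set.Icc 0 l1 ×ˢ Set.univ))
    (hφxxc : ContinuousOn (fun p : ℝ × ℝ => pXX φ p.1 p.2) (Set.Icc 0 l1 ×ˢ Set.univ))
    (hφtc : ContinuousOn (fun p : ℝ × ℝ => pT φ p.1 p.2) (Set.Icc 0 l1 ×ˢ Set.univ))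
    (hφdiff : ∀ t : ℝ, ∀ x ∈ Set.Icc (0:ℝ) l1,
      DifferentiableAt ℝ (fun y => φ y t) x ∧
      DifferentiableAt ℝ (fun y => pX φ y t) x ∧
      DifferentiableAt ℝ (fun s => φ x s) t)
    (hφbc : ∀ t : ℝ, φ 0 t = 0 ∧ φ l1 t = 0)
    (hφpos : ∀ t : ℝ, ∀ x ∈ Set.Ioo (0:ℝ) l1, 0 < φ x t)
    (hφpde : ∀ t : ℝ, ∀ x ∈ Set.Ioo (0:ℝ) l1,
      pT φ x t - d * pXX φ x t + α * pX φ x t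
        = -γ x t * φ x t + (β x t / μ1) * φ x t)
    -- regularity, periodicity, boundary data and positivity of ψ on [0,l2]
    (hψper : ∀ x t, ψ x (t + T) = ψ x t)
    (hψc : ContinuousOn (fun p : ℝ × ℝ => ψ p.1 p.2) (Set.Icc 0 l2 ×ˢ Set.univ))
    (hψxc : ContinuousOn (fun p : ℝ × ℝ => pX ψ p.1 p.2) (Set.Icc 0 l2 ×ˢ Set.univ))
    (hψxxc : ContinuousOn (fun p : ℝ × ℝ => pXX ψ p.1 p.2) (Set.Icc 0 l2 ×ˢ Set.univ))
    (hψtc : ContinuousOn (fun p : ℝ × ℝ => pT ψ p.1 p.2) (Set.Icc 0 l2 ×ˢ Set.univ))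
    (hψdiff : ∀ t : ℝ, ∀ x ∈ Set.Icc (0:ℝ) l2,
      DifferentiableAt ℝ (fun y => ψ y t) x ∧
      DifferentiableAt ℝ (fun y => pX ψ y t) x ∧
      DifferentiableAt ℝ (fun s => ψ x s) t)
    (hψbc : ∀ t : ℝ, ψ 0 t = 0 ∧ ψ l2 t = 0)
    (hψpos : ∀ t : ℝ, ∀ x ∈ Set.Ioo (0:ℝ) l2, 0 < ψ x t)
    (hψpde : ∀ t : ℝ, ∀ x ∈ Set.Ioo (0:ℝ) l2,
      -pT ψ x t - d * pXX ψ x t - α * pX ψ x t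
        = -γ x t * ψ x t + (β x t / μ2) * ψ x t) :
    -- the boundary-term identity
    (1 / μ1 - 1 / μ2) *
        (∫ t in (0:ℝ)..T, ∫ x in (0:ℝ)..l1, β x t * (φ x t * ψ x t))
      = -d * ∫ t in (0:ℝ)..T, ψ l1 t * pX φ l1 t ∧
    -- consequence under the Hopf boundary-point inequality
    ((∀ t : ℝ, pX φ l1 t < 0) → μ1 < μ2) := by
  have hsub : Icc 0 l1 ⊆ Icc 0 l2 := Icc_subset_Icc_right hl12.le
  have hφ : IsC21On φ (Icc 0 l1) := ⟨hφc, hφxc, hφxxc, hφtc, hφdiff⟩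
  have hψ : IsC21On ψ (Icc 0 l1) := IsC21On.mono ⟨hψc, hψxc, hψxxc, hψtc, hψdiff⟩ hsub
  have identity := one_div_sub_one_div_mul_integral_eq_boundary_flux hl1.le hφ hψ
    (hβc.mono (prod_mono hsub subset_rfl)) hφper hψper hφbc (fun t => (hψbc t).1) hφpde
    (fun t x hx => hψpde t x ⟨hx.1, hx.2.trans hl12⟩)
  refine ⟨identity, fun hHopf => ?_⟩
  have hl1_mem : l1 ∈ Icc 0 l1 := right_mem_Icc.2 hl1.le
  have hflux : ∫ t in 0..T, ψ l1 t * pX φ l1 t < 0 := by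
    have hcont : Continuous fun t => ψ l1 t * pX φ l1 t :=
      continuousOn_univ.1 ((hψ.continuousOn.uncurry_left l1 hl1_mem).mul
        (hφ.continuousOn_pX.uncurry_left l1 hl1_mem))
    simpa using intervalIntegral_pos_of_pos_on (hcont.neg.intervalIntegrable 0 T)
      (fun t _ => neg_pos.2 (mul_neg_of_pos_of_neg (hψpos t l1 ⟨hl1, hl12⟩) (hHopf t))) hT
  have hweighted : 0 ≤ ∫ t in 0..T, ∫ x in 0..l1, β x t * (φ x t * ψ x t) :=
    intervalIntegral.integral_nonneg hT.le fun t _ =>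
      intervalIntegral.integral_nonneg hl1.le fun x hx =>
        mul_nonneg (hβpos x (hsub hx) t).le <| mul_nonneg
          (nonneg_on_Icc_of_pos_on_Ioo (hφpos t) (hφbc t).1 (hφbc t).2 x hx)
          (nonneg_on_Icc_of_pos_on_Ioo (hψpos t) (hψbc t).1 (hψbc t).2 x (hsub hx))
  have hcoeff : 0 < 1 / μ1 - 1 / μ2 :=
    pos_of_mul_pos_left (identity ▸ mul_pos_of_neg_of_neg (neg_neg_of_pos hd) hflux) hweighted
  exact (one_div_lt_one_div hμ2 hμ1).1 (sub_pos.1 hcoeff)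

/-- **Identity from the proof of Theorem 3.4(3).** For the principal eigenpair `(μ1, φ)`
on `(0,l1)` and the adjoint eigenpair `(μ2, ψ)` on the larger interval `(0,l2)`:
`(1/μ1 − 1/μ2)·∫₀ᵀ∫₀^{l1} βφψ = −d·∫₀ᵀ ψ(l1,t)φ_x(l1,t) dt`, and if the Hopf
boundary-point inequality `φ_x(l1,t) < 0` holds, then `μ1 < μ2`. -/
theorem nested_interval_eigenvalue_identity
    (d α T l1 l2 : ℝ) (hd : 0 < d) (hT : 0 < T) (hl1 : 0 < l1) (hl12 : l1 < l2)
    (β γ : ℝ → ℝ → ℝ)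
    (hβc : ContinuousOn (fun p : ℝ × ℝ => β p.1 p.2) (Set.Icc 0 l2 ×ˢ Set.univ))
    (hγc : ContinuousOn (fun p : ℝ × ℝ => γ p.1 p.2) (Set.Icc 0 l2 ×ˢ Set.univ))
    (hβper : ∀ x t, β x (t + T) = β x t) (hγper : ∀ x t, γ x (t + T) = γ x t)
    (hβpos : ∀ x ∈ Set.Icc (0:ℝ) l2, ∀ t : ℝ, 0 < β x t)
    (μ1 μ2 : ℝ) (hμ1 : 0 < μ1) (hμ2 : 0 < μ2)
    (φ ψ : ℝ → ℝ → ℝ)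
    -- regularity, periodicity, boundary data and positivity of φ on [0,l1]
    (hφper : ∀ x t, φ x (t + T) = φ x t)
    (hφc : ContinuousOn (fun p : ℝ × ℝ => φ p.1 p.2) (Set.Icc 0 l1 ×ˢ Set.univ))
    (hφxc : ContinuousOn (fun p : ℝ × ℝ => pX φ p.1 p.2) (Set.Icc 0 l1 ×ˢ Set.univ))
    (hφxxc : ContinuousOn (fun p : ℝ × ℝ => pXX φ p.1 p.2) (Set.Icc 0 l1 ×ˢ Set.univ))
    (hφtc : ContinuousOn (fun p : ℝ × ℝ => pT φ p.1 p.2) (Set.Icc 0 l1 ×ˢ Set.univ))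
    (hφdiff : ∀ t : ℝ, ∀ x ∈ Set.Icc (0:ℝ) l1,
      DifferentiableAt ℝ (fun y => φ y t) x ∧
      DifferentiableAt ℝ (fun y => pX φ y t) x ∧
      DifferentiableAt ℝ (fun s => φ x s) t)
    (hφbc : ∀ t : ℝ, φ 0 t = 0 ∧ φ l1 t = 0)
    (hφpos : ∀ t : ℝ, ∀ x ∈ Set.Ioo (0:ℝ) l1, 0 < φ x t)
    (hφpde : ∀ t : ℝ, ∀ x ∈ Set.Ioo (0:ℝ) l1,
      pT φ x t - d * pXX φ x t + α * pX φ x t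
        = -γ x t * φ x t + (β x t / μ1) * φ x t)
    -- regularity, periodicity, boundary data and positivity of ψ on [0,l2]
    (hψper : ∀ x t, ψ x (t + T) = ψ x t)
    (hψc : ContinuousOn (fun p : ℝ × ℝ => ψ p.1 p.2) (Set.Icc 0 l2 ×ˢ Set.univ))
    (hψxc : ContinuousOn (fun p : ℝ × ℝ => pX ψ p.1 p.2) (Set.Icc 0 l2 ×ˢ Set.univ))
    (hψxxc : ContinuousOn (fun p : ℝ × ℝ => pXX ψ p.1 p.2) (Set.Icc 0 l2 ×ˢ Set.univ))
    (hψtc : ContinuousOn (fun p : ℝ × ℝ => pT ψ p.1 p.2) (Set.Icc 0 l2 ×ˢ Set.univ))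
    (hψdiff : ∀ t : ℝ, ∀ x ∈ Set.Icc (0:ℝ) l2,
      DifferentiableAt ℝ (fun y => ψ y t) x ∧
      DifferentiableAt ℝ (fun y => pX ψ y t) x ∧
      DifferentiableAt ℝ (fun s => ψ x s) t)
    (hψbc : ∀ t : ℝ, ψ 0 t = 0 ∧ ψ l2 t = 0)
    (hψpos : ∀ t : ℝ, ∀ x ∈ Set.Ioo (0:ℝ) l2, 0 < ψ x t)
    (hψpde : ∀ t : ℝ, ∀ x ∈ Set.Ioo (0:ℝ) l2,
      -pT ψ x t - d * pXX ψ x t - α * pX ψ x t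
        = -γ x t * ψ x t + (β x t / μ2) * ψ x t) :
    -- the boundary-term identity
    (1 / μ1 - 1 / μ2) *
        (∫ t in (0:ℝ)..T, ∫ x in (0:ℝ)..l1, β x t * (φ x t * ψ x t))
      = -d * ∫ t in (0:ℝ)..T, ψ l1 t * pX φ l1 t ∧
    -- consequence under the Hopf boundary-point inequality
    ((∀ t : ℝ, pX φ l1 t < 0) → μ1 < μ2) :=
  nested_interval_eigenvalue_identity_general d α T l1 l2 hd hT hl1 hl12 β γ hβc hβpos μ1 μ2 hμ1 hμ2
    φ ψ hφper hφc hφxc hφxxc hφtc hφdiff hφbc hφpos hφpde hψper hψc hψxc hψxxc hψtc hψdiff hψbc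
    hψpos hψpde
end

section
/- (Persistence when the eigenvalue is negative; Theorem 4.2 restated.) Let (I;g,h) be a solution of the free boundary problem, and let t1≥0. Suppose there exist λ0<0 and ψ:[g(t1),h(t1)]×ℝ→ℝ, T-periodic in t, continuous together with ψ_t,ψ_x,ψ_xx, with ψ(g(t1),t)=ψ(h(t1),t)=0, 0<ψ(x,t)≤1 for x∈(g(t1),h(t1)), satisfying ψ_t−dψ_xx+αψ_x=(β(x,t)−γ(x,t))ψ+λ0ψ on (g(t1),h(t1))×ℝ. Suppose further δ>0 satisfies δ≤N*·(−λ0)/β̄ where β̄=max_{[g(t1),h(t1)]×[0,T]}β(x,t), and δψ(x,t1)≤I(x,t1) for all x∈[g(t1),h(t1)]. Then I(x,t)≥δψ(x,t) for all x∈[g(t1),h(t1)] and all t≥t1; in particular, liminf_{t→∞} max_{x∈[g(t1),h(t1)]}I(x,t) ≥ δ·liminf_{t→∞}max_xψ(x,t) > 0, so the disease persists (vanishing does not occur). -/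
/-- Solution of the free boundary problem (FBP) on [0,∞), with `I` nonnegative. -/
structure IsFBPSol (d α μ Nstar h0 : ℝ) (β γ : ℝ → ℝ → ℝ) (I0 : ℝ → ℝ)
    (I : ℝ → ℝ → ℝ) (g h : ℝ → ℝ) : Prop where
  hg0 : g 0 = -h0
  hh0 : h 0 = h0
  hgh : ∀ t ≥ (0:ℝ), g t < h t
  hgC1 : ContDiffOn ℝ 1 g (Set.Ici 0)
  hhC1 : ContDiffOn ℝ 1 h (Set.Ici 0)
  hgmono : AntitoneOn g (Set.Ici 0)
  hhmono : MonotoneOn h (Set.Ici 0)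
  hIcont : ContinuousOn (fun p : ℝ × ℝ => I p.1 p.2)
      {p : ℝ × ℝ | 0 ≤ p.2 ∧ g p.2 ≤ p.1 ∧ p.1 ≤ h p.2}
  hInonneg : ∀ t ≥ (0:ℝ), ∀ x ∈ Set.Icc (g t) (h t), 0 ≤ I x t
  hIx : ∀ t > (0:ℝ), ∀ x ∈ Set.Icc (g t) (h t), DifferentiableAt ℝ (fun y => I y t) x
  hIxcont : ∀ t > (0:ℝ), ContinuousOn (fun y => pX I y t) (Set.Icc (g t) (h t))
  hIxx : ∀ t > (0:ℝ), ∀ x ∈ Set.Ioo (g t) (h t), DifferentiableAt ℝ (fun y => pX I y t) x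
  hIt : ∀ t > (0:ℝ), ∀ x ∈ Set.Ioo (g t) (h t), DifferentiableAt ℝ (fun s => I x s) t
  hpde : ∀ t > (0:ℝ), ∀ x ∈ Set.Ioo (g t) (h t),
      pT I x t - d * pXX I x t + α * pX I x t
        = (β x t - γ x t) * I x t - (β x t / Nstar) * (I x t) ^ 2
  hIg : ∀ t > (0:ℝ), I (g t) t = 0
  hIh : ∀ t > (0:ℝ), I (h t) t = 0
  hstefg : ∀ t > (0:ℝ), deriv g t = -μ * pX I (g t) t
  hstefh : ∀ t > (0:ℝ), deriv h t = -μ * pX I (h t) t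
  hinit : ∀ x ∈ Set.Icc (-h0) h0, I x 0 = I0 x

/-!
Both conclusions rest on one minimum principle: if `w` is continuous on a region
`a ≤ t`, `l t ≤ x ≤ r t`, nonnegative on its parabolic boundary, and satisfies
`w_t - d w_xx + α w_x > K w` wherever `w < 0`, then at a negative minimum of `exp (-K t) w`
the first- and second-derivative tests in `x` and the one-sided derivative in `t` contradict the
inequality. For `w = N* - I` on the moving domain this gives `I ≤ N*`. For `w = I - δψ` on the
fixed strip `[g t1, h t1]` it gives `δψ ≤ I`: where `I < δψ`, the choice `δ β̄ ≤ N* (-λ0)` and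
`ψ ≤ 1` make the logistic loss `β I² / N*` at most `-λ0 δψ`, the surplus of the lower solution.

For the liminf statements, `ψ` is periodic and positive at an interior point, so its spatial
maxima stay above a positive constant, while `I ≤ N*` keeps the spatial maxima of `I` bounded,
without which `Filter.liminf` would take a junk value.
-/

open Set Filter Topology Real

theorem IsLocalMin.nonneg_of_hasDerivAt_of_hasDerivAt {f f' : ℝ → ℝ} {x₀ f'' : ℝ}
    (hmin : IsLocalMin f x₀) (hf : ∀ᶠ x in 𝓝 x₀, HasDerivAt f (f' x) x)
    (hf' : HasDerivAt f' f'' x₀) : 0 ≤ f'' := by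
  by_contra! hneg
  have hderiv : deriv f =ᶠ[𝓝 x₀] f' := hf.mono fun x hx => hx.deriv
  have hmax : IsLocalMax f x₀ :=
    isLocalMax_of_deriv_deriv_neg (by rwa [(hf'.congr_of_eventuallyEq hderiv).deriv])
      (by rw [hderiv.eq_of_nhds]; exact hmin.hasDerivAt_eq_zero hf.self_of_nhds)
      hf.self_of_nhds.continuousAt
  have hconst : ∀ᶠ x in 𝓝 x₀, f =ᶠ[𝓝 x] fun _ => f x₀ :=
    ((hmin.and hmax).mono fun x hx => le_antisymm hx.2 hx.1).eventually_nhds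
  have hf'_zero : f' =ᶠ[𝓝 x₀] fun _ => 0 := by
    filter_upwards [hf, hconst] with x hx hxc
    exact hx.unique ((hasDerivAt_const x (f x₀)).congr_of_eventuallyEq hxc)
  exact hneg.ne ((hf'.congr_of_eventuallyEq hf'_zero.symm).unique (hasDerivAt_const x₀ 0))

theorem IsLocalMinOn.nonpos_of_hasDerivAt_of_Iic {f : ℝ → ℝ} {f' b : ℝ}
    (hmin : IsLocalMinOn f (Iic b) b) (hf : HasDerivAt f f' b) : f' ≤ 0 := by
  have hcone : (-1 : ℝ) ∈ posTangentConeAt (Iic b) b :=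
    mem_posTangentConeAt_of_segment_subset (by
      rw [segment_symm, segment_eq_Icc (by linarith)]; exact Icc_subset_Iic_self)
  simpa using hmin.hasFDerivWithinAt_nonneg hf.hasFDerivAt.hasFDerivWithinAt hcone

theorem le_mul_of_isLocalMinOn_exp_mul {f : ℝ → ℝ} {f' K t₀ : ℝ}
    (hmin : IsLocalMinOn (fun s => exp (-K * s) * f s) (Iic t₀) t₀) (hf : HasDerivAt f f' t₀) :
    f' ≤ K * f t₀ := by
  have hderiv : HasDerivAt (fun s => exp (-K * s) * f s) (exp (-K * t₀) * (f' - K * f t₀)) t₀ :=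
    ((((hasDerivAt_id' t₀).const_mul (-K)).exp).mul hf).congr_deriv (by ring)
  exact sub_nonpos.1 (nonpos_of_mul_nonpos_right (hmin.nonpos_of_hasDerivAt_of_Iic hderiv)
    (exp_pos _))

theorem isCompact_setOf_mem_Icc_of_continuousOn {l r : ℝ → ℝ} {a b : ℝ}
    (hl : ContinuousOn l (Icc a b)) (hr : ContinuousOn r (Icc a b)) :
    IsCompact {p : ℝ × ℝ | p.2 ∈ Icc a b ∧ p.1 ∈ Icc (l p.2) (r p.2)} := by
  obtain ⟨m, hm⟩ := isCompact_Icc.bddBelow_image hl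
  obtain ⟨M, hM⟩ := isCompact_Icc.bddAbove_image hr
  have hstrip : IsClosed {p : ℝ × ℝ | p.2 ∈ Icc a b} := isClosed_Icc.preimage continuous_snd
  have hl' : ContinuousOn (fun p : ℝ × ℝ => l p.2) {p | p.2 ∈ Icc a b} :=
    hl.comp continuous_snd.continuousOn fun _ hp => hp
  have hr' : ContinuousOn (fun p : ℝ × ℝ => r p.2) {p | p.2 ∈ Icc a b} :=
    hr.comp continuous_snd.continuousOn fun _ hp => hp
  refine (isCompact_Icc.prod isCompact_Icc : IsCompact (Icc m M ×ˢ Icc a b)).of_isClosed_subset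
    ?_ ?_
  · convert (hstrip.isClosed_le hl' continuous_fst.continuousOn).inter
      (hstrip.isClosed_le continuous_fst.continuousOn hr') using 1
    ext p; simp [and_assoc, and_left_comm]
  · rintro ⟨x, t⟩ ⟨ht, hx⟩
    exact ⟨⟨(hm ⟨t, ht, rfl⟩).trans hx.1, hx.2.trans (hM ⟨t, ht, rfl⟩)⟩, ht⟩

theorem nonneg_of_parabolic_minimum_principle {d α K a : ℝ} {l r : ℝ → ℝ}
    {w wx wxx wt : ℝ → ℝ → ℝ} (hd : 0 ≤ d)
    (hl : ContinuousOn l (Ici a)) (hr : ContinuousOn r (Ici a))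
    (hw : ContinuousOn (fun p : ℝ × ℝ => w p.1 p.2) {p | a ≤ p.2 ∧ l p.2 ≤ p.1 ∧ p.1 ≤ r p.2})
    (hinit : ∀ x ∈ Icc (l a) (r a), 0 ≤ w x a)
    (hleft : ∀ t > a, 0 ≤ w (l t) t) (hright : ∀ t > a, 0 ≤ w (r t) t)
    (hwx : ∀ t > a, ∀ x ∈ Ioo (l t) (r t), HasDerivAt (w · t) (wx x t) x)
    (hwxx : ∀ t > a, ∀ x ∈ Ioo (l t) (r t), HasDerivAt (wx · t) (wxx x t) x)
    (hwt : ∀ t > a, ∀ x ∈ Ioo (l t) (r t), HasDerivAt (w x ·) (wt x t) t)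
    (hsuper : ∀ t > a, ∀ x ∈ Ioo (l t) (r t), w x t < 0 →
      K * w x t < wt x t - d * wxx x t + α * wx x t) :
    ∀ t ≥ a, ∀ x ∈ Icc (l t) (r t), 0 ≤ w x t := by
  intro b hab x hx
  set R := {p : ℝ × ℝ | p.2 ∈ Icc a b ∧ p.1 ∈ Icc (l p.2) (r p.2)}
  have hxb : (x, b) ∈ R := ⟨⟨hab, le_rfl⟩, hx⟩
  have hRw : R ⊆ {p | a ≤ p.2 ∧ l p.2 ≤ p.1 ∧ p.1 ≤ r p.2} := fun p hp => ⟨hp.1.1, hp.2⟩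
  obtain ⟨⟨x₀, t₀⟩, ⟨⟨hat₀, ht₀b⟩, hx₀ : x₀ ∈ Icc (l t₀) (r t₀)⟩, hmin⟩ :=
    (isCompact_setOf_mem_Icc_of_continuousOn (hl.mono Icc_subset_Ici_self)
      (hr.mono Icc_subset_Ici_self)).exists_isMinOn ⟨_, hxb⟩
      ((continuous_const.mul continuous_snd).rexp.continuousOn.mul (hw.mono hRw))
  have hG : ∀ p ∈ R, exp (-K * t₀) * w x₀ t₀ ≤ exp (-K * p.2) * w p.1 p.2 :=
    fun p hp => hmin hp
  suffices 0 ≤ w x₀ t₀ from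
    nonneg_of_mul_nonneg_right ((mul_nonneg (exp_pos _).le this).trans (hG _ hxb)) (exp_pos _)
  by_contra! hneg
  have ht₀ : a < t₀ := hat₀.lt_of_ne (by rintro rfl; exact hneg.not_ge (hinit x₀ hx₀))
  have hx₀' : x₀ ∈ Ioo (l t₀) (r t₀) :=
    ⟨hx₀.1.lt_of_ne fun h => hneg.not_ge (h ▸ hleft t₀ ht₀),
      hx₀.2.lt_of_ne fun h => hneg.not_ge (h.symm ▸ hright t₀ ht₀)⟩
  have hxmin : IsLocalMin (w · t₀) x₀ := by
    filter_upwards [Icc_mem_nhds hx₀'.1 hx₀'.2] with y hy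
    exact le_of_mul_le_mul_left (hG (y, t₀) ⟨⟨hat₀, ht₀b⟩, hy⟩) (exp_pos _)
  have hwx₀ : wx x₀ t₀ = 0 := hxmin.hasDerivAt_eq_zero (hwx t₀ ht₀ x₀ hx₀')
  have hwxx₀ : 0 ≤ wxx x₀ t₀ := hxmin.nonneg_of_hasDerivAt_of_hasDerivAt
    (eventually_of_mem (Ioo_mem_nhds hx₀'.1 hx₀'.2) fun y hy => hwx t₀ ht₀ y hy)
    (hwxx t₀ ht₀ x₀ hx₀')
  have htmin : IsLocalMinOn (fun s => exp (-K * s) * w x₀ s) (Iic t₀) t₀ := by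
    have hlt : ∀ᶠ s in 𝓝 t₀, l s < x₀ :=
      (hl.continuousAt (Ici_mem_nhds ht₀)).eventually_lt_const hx₀'.1
    have hrt : ∀ᶠ s in 𝓝 t₀, x₀ < r s :=
      (hr.continuousAt (Ici_mem_nhds ht₀)).eventually_const_lt hx₀'.2
    filter_upwards [nhdsWithin_le_nhds hlt, nhdsWithin_le_nhds hrt,
      nhdsWithin_le_nhds (eventually_gt_nhds ht₀), self_mem_nhdsWithin] with s hls hrs has hst
    exact hG (x₀, s) ⟨⟨has.le, hst.trans ht₀b⟩, hls.le, hrs.le⟩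
  have hwt₀ : wt x₀ t₀ ≤ K * w x₀ t₀ :=
    le_mul_of_isLocalMinOn_exp_mul htmin (hwt t₀ ht₀ x₀ hx₀')
  have hpde := hsuper t₀ ht₀ x₀ hx₀' hneg
  rw [hwx₀] at hpde
  linarith [mul_nonneg hd hwxx₀]

theorem forall_mem_Icc_of_forall_mem_Ioo {a b : ℝ} {p : ℝ → Prop} (ha : p a) (hb : p b)
    (hab : ∀ x ∈ Ioo a b, p x) : ∀ x ∈ Icc a b, p x := by
  intro x hx
  rcases hx.1.eq_or_lt with rfl | hax
  · exact ha
  rcases hx.2.eq_or_lt with rfl | hxb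
  · exact hb
  exact hab x ⟨hax, hxb⟩

theorem logistic_reaction_neg {β γ N I : ℝ} (hN : 0 < N) (hβ : 0 < β) (hγ : 0 ≤ γ)
    (hI : N < I) : (β - γ) * I - β / N * I ^ 2 < 0 := by
  have hIN : 1 < I / N := (one_lt_div hN).2 hI
  have hsplit : (β - γ) * I - β / N * I ^ 2 = β * I * (1 - I / N) - γ * I := by
    field_simp; ring
  rw [hsplit]
  nlinarith [mul_pos hβ (hN.trans hI), mul_nonneg hγ (hN.trans hI).le]

theorem logistic_loss_le {β βbar N lambda0 δ ψ I : ℝ} (hN : 0 < N) (hβ : 0 ≤ β) (hββ : β ≤ βbar)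
    (hδ : 0 ≤ δ) (hδβ : δ * βbar ≤ N * -lambda0) (hψ : 0 ≤ ψ) (hψ1 : ψ ≤ 1) (hI : 0 ≤ I)
    (hIψ : I ≤ δ * ψ) : β / N * I ^ 2 ≤ -lambda0 * (δ * ψ) := by
  have hlam : δ * βbar / N ≤ -lambda0 := (div_le_iff₀ hN).2 (by linarith)
  have hδψ : 0 ≤ δ * ψ := mul_nonneg hδ hψ
  have hβbar : 0 ≤ βbar := hβ.trans hββ
  calc β / N * I ^ 2 ≤ βbar / N * (δ * ψ) ^ 2 := by gcongr
    _ = δ * βbar / N * ψ * (δ * ψ) := by ring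
    _ ≤ -lambda0 * ψ * (δ * ψ) := by gcongr
    _ ≤ -lambda0 * 1 * (δ * ψ) := by gcongr; exact (by positivity : 0 ≤ δ * βbar / N).trans hlam
    _ = -lambda0 * (δ * ψ) := by ring

theorem Function.Periodic.exists_pos_le {f : ℝ → ℝ} {c : ℝ} (hf : Function.Periodic f c)
    (hc : c ≠ 0) (hcont : Continuous f) (hpos : ∀ t, 0 < f t) : ∃ m > 0, ∀ t, m ≤ f t := by
  obtain ⟨_, ⟨t₀, rfl⟩, hleast⟩ := (hf.compact_of_continuous hc hcont).exists_isLeast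
    (range_nonempty f)
  exact ⟨f t₀, hpos t₀, fun t => hleast ⟨t, rfl⟩⟩

theorem const_mul_liminf_le_liminf {ι : Type*} {F : Filter ι} [F.NeBot] {u v : ι → ℝ} {c : ℝ}
    (hc : 0 ≤ c) (hv : IsBoundedUnder (· ≥ ·) F v) (hv' : IsBoundedUnder (· ≤ ·) F v)
    (hu : IsBoundedUnder (· ≤ ·) F u) (hle : ∀ᶠ i in F, c * v i ≤ u i) :
    c * liminf v F ≤ liminf u F := by
  rw [(monotone_mul_left_of_nonneg hc).map_liminf_of_continuousAt v
    (continuous_const_mul c).continuousAt hv'.isCoboundedUnder_ge hv]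
  exact liminf_le_liminf hle ((monotone_mul_left_of_nonneg hc).isBoundedUnder_ge_comp hv)
    hu.isCoboundedUnder_ge

theorem const_mul_sSup_image_le {S : Set ℝ} {u v : ℝ → ℝ} {c C : ℝ} (hS : S.Nonempty)
    (hc : 0 < c) (hle : ∀ x ∈ S, c * v x ≤ u x) (hu : ∀ x ∈ S, u x ≤ C) :
    c * sSup (v '' S) ≤ sSup (u '' S) := by
  rw [← le_div_iff₀' hc]
  refine csSup_le (hS.image _) (forall_mem_image.2 fun x hx => (le_div_iff₀' hc).2 ?_)
  exact (hle x hx).trans (le_csSup ⟨C, forall_mem_image.2 hu⟩ (mem_image_of_mem _ hx))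

theorem le_liminf_sSup_image_of_mul_le {S : Set ℝ} {u v : ℝ → ℝ → ℝ} {c C m M t₁ : ℝ}
    (hc : 0 < c) (hm : 0 < m) (hle : ∀ t ≥ t₁, ∀ x ∈ S, c * v x t ≤ u x t)
    (hu : ∀ t ≥ t₁, ∀ x ∈ S, u x t ≤ C) (hvM : ∀ t, ∀ x ∈ S, v x t ≤ M)
    (hvm : ∀ t, ∃ x ∈ S, m ≤ v x t) :
    liminf (fun t => sSup ((fun x => u x t) '' S)) atTop
        ≥ c * liminf (fun t => sSup ((fun x => v x t) '' S)) atTop ∧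
      0 < c * liminf (fun t => sSup ((fun x => v x t) '' S)) atTop := by
  obtain ⟨x₀, hx₀, -⟩ := hvm 0
  have hS : S.Nonempty := ⟨x₀, hx₀⟩
  set V := fun t => sSup ((fun x => v x t) '' S)
  have hV_le : ∀ t, V t ≤ M := fun t => csSup_le (hS.image _) (forall_mem_image.2 (hvM t))
  have hV_ge : ∀ t, m ≤ V t := fun t => by
    obtain ⟨x, hx, hmx⟩ := hvm t
    exact hmx.trans (le_csSup ⟨M, forall_mem_image.2 (hvM t)⟩ (mem_image_of_mem _ hx))
  have hU_le : ∀ t ≥ t₁, sSup ((fun x => u x t) '' S) ≤ C := fun t ht =>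
    csSup_le (hS.image _) (forall_mem_image.2 (hu t ht))
  have hVbdd : IsBoundedUnder (· ≤ ·) atTop V := isBoundedUnder_of ⟨M, hV_le⟩
  refine ⟨const_mul_liminf_le_liminf hc.le (isBoundedUnder_of ⟨m, hV_ge⟩) hVbdd
    ⟨C, eventually_map.2 ((eventually_ge_atTop t₁).mono hU_le)⟩
    ((eventually_ge_atTop t₁).mono fun t ht => const_mul_sSup_image_le hS hc (hle t ht) (hu t ht)),
    mul_pos hc (hm.trans_le (le_liminf_of_le hVbdd.isCoboundedUnder_ge (.of_forall hV_ge)))⟩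

namespace IsFBPSol

variable {d α μ Nstar h0 : ℝ} {β γ : ℝ → ℝ → ℝ} {I0 : ℝ → ℝ} {I : ℝ → ℝ → ℝ} {g h : ℝ → ℝ}

theorem Icc_subset_of_le (hsol : IsFBPSol d α μ Nstar h0 β γ I0 I g h) {s t : ℝ} (hs : 0 ≤ s)
    (hst : s ≤ t) : Icc (g s) (h s) ⊆ Icc (g t) (h t) :=
  Icc_subset_Icc (hsol.hgmono hs (hs.trans hst) hst) (hsol.hhmono hs (hs.trans hst) hst)

theorem Ioo_subset_of_le (hsol : IsFBPSol d α μ Nstar h0 β γ I0 I g h) {s t : ℝ} (hs : 0 ≤ s)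
    (hst : s ≤ t) : Ioo (g s) (h s) ⊆ Ioo (g t) (h t) :=
  Ioo_subset_Ioo (hsol.hgmono hs (hs.trans hst) hst) (hsol.hhmono hs (hs.trans hst) hst)

theorem le_Nstar (hsol : IsFBPSol d α μ Nstar h0 β γ I0 I g h) (hd : 0 ≤ d) (hN : 0 < Nstar)
    (hβ : ∀ x t, 0 ≤ t → 0 < β x t) (hγ : ∀ x t, 0 ≤ t → 0 ≤ γ x t)
    (hinit : ∀ x ∈ Icc (g 0) (h 0), I x 0 ≤ Nstar) :
    ∀ t ≥ 0, ∀ x ∈ Icc (g t) (h t), I x t ≤ Nstar := by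
  have key := nonneg_of_parabolic_minimum_principle (w := fun x t => Nstar - I x t)
    (wx := fun x t => -pX I x t) (wxx := fun x t => -pXX I x t) (wt := fun x t => -pT I x t)
    (K := 0) (α := α) hd hsol.hgC1.continuousOn hsol.hhC1.continuousOn
    (continuousOn_const.sub hsol.hIcont) (fun x hx => sub_nonneg.2 (hinit x hx))
    (fun t ht => by simp [hsol.hIg t ht, hN.le]) (fun t ht => by simp [hsol.hIh t ht, hN.le])
    (fun t ht x hx => (hsol.hIx t ht x (Ioo_subset_Icc_self hx)).hasDerivAt.const_sub Nstar)
    (fun t ht x hx => (hsol.hIxx t ht x hx).hasDerivAt.neg)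
    (fun t ht x hx => (hsol.hIt t ht x hx).hasDerivAt.const_sub Nstar)
    (fun t ht x hx hneg => by
      have := logistic_reaction_neg hN (hβ x t ht.le) (hγ x t ht.le) (sub_neg.1 hneg)
      linarith [hsol.hpde t ht x hx])
  exact fun t ht x hx => sub_nonneg.1 (key t ht x hx)

theorem mul_le_of_lower_solution (hsol : IsFBPSol d α μ Nstar h0 β γ I0 I g h) (hd : 0 ≤ d)
    (hN : 0 < Nstar) (hβ : ∀ x t, 0 ≤ t → 0 ≤ β x t) (hγ : ∀ x t, 0 ≤ t → 0 ≤ γ x t)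
    {t1 lambda0 βbar δ : ℝ} {ψ : ℝ → ℝ → ℝ} (ht1 : 0 ≤ t1)
    (hψc : ContinuousOn (fun p : ℝ × ℝ => ψ p.1 p.2)
      (Icc (g t1) (h t1) ×ˢ univ))
    (hψdiff : ∀ t : ℝ, ∀ x ∈ Ioo (g t1) (h t1),
      DifferentiableAt ℝ (fun y => ψ y t) x ∧
      DifferentiableAt ℝ (fun y => pX ψ y t) x ∧
      DifferentiableAt ℝ (fun s => ψ x s) t)
    (hψbc : ∀ t : ℝ, ψ (g t1) t = 0 ∧ ψ (h t1) t = 0)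
    (hψbd : ∀ t : ℝ, ∀ x ∈ Ioo (g t1) (h t1), 0 < ψ x t ∧ ψ x t ≤ 1)
    (hψpde : ∀ t : ℝ, ∀ x ∈ Ioo (g t1) (h t1),
      pT ψ x t - d * pXX ψ x t + α * pX ψ x t
        = (β x t - γ x t) * ψ x t + lambda0 * ψ x t)
    (hβbar : ∀ x ∈ Icc (g t1) (h t1), ∀ t, β x t ≤ βbar)
    (hδ : 0 ≤ δ) (hδβ : δ * βbar ≤ Nstar * -lambda0)
    (hδinit : ∀ x ∈ Icc (g t1) (h t1), δ * ψ x t1 ≤ I x t1) :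
    ∀ t ≥ t1, ∀ x ∈ Icc (g t1) (h t1), δ * ψ x t ≤ I x t := by
  have hI0 : ∀ t ≥ t1, ∀ x ∈ Icc (g t1) (h t1), 0 ≤ I x t := fun t ht x hx =>
    hsol.hInonneg t (ht1.trans ht) x (hsol.Icc_subset_of_le ht1 ht hx)
  have hIoo : ∀ t > t1, Ioo (g t1) (h t1) ⊆ Ioo (g t) (h t) := fun t ht =>
    hsol.Ioo_subset_of_le ht1 ht.le
  have hgh : g t1 ≤ h t1 := (hsol.hgh t1 ht1).le
  -- `K = βbar + 1` exceeds the growth rate `β - γ` on the strip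
  have key := nonneg_of_parabolic_minimum_principle (w := fun x t => I x t - δ * ψ x t)
    (wx := fun x t => pX I x t - δ * pX ψ x t) (wxx := fun x t => pXX I x t - δ * pXX ψ x t)
    (wt := fun x t => pT I x t - δ * pT ψ x t) (l := fun _ => g t1) (r := fun _ => h t1)
    (K := βbar + 1) (α := α) hd continuousOn_const continuousOn_const
    ((hsol.hIcont.mono fun p hp => ⟨ht1.trans hp.1, hsol.Icc_subset_of_le ht1 hp.1 hp.2⟩).sub
      (continuousOn_const.mul (hψc.mono fun p hp => ⟨hp.2, mem_univ _⟩)))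
    (fun x hx => sub_nonneg.2 (hδinit x hx))
    (fun t ht => by simpa [(hψbc t).1] using hI0 t ht.le _ (left_mem_Icc.2 hgh))
    (fun t ht => by simpa [(hψbc t).2] using hI0 t ht.le _ (right_mem_Icc.2 hgh))
    (fun t ht x hx => (hsol.hIx t (ht1.trans_lt ht) x (Ioo_subset_Icc_self (hIoo t ht hx))
      ).hasDerivAt.sub ((hψdiff t x hx).1.hasDerivAt.const_mul δ))
    (fun t ht x hx => (hsol.hIxx t (ht1.trans_lt ht) x (hIoo t ht hx)).hasDerivAt.sub
      ((hψdiff t x hx).2.1.hasDerivAt.const_mul δ))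
    (fun t ht x hx => (hsol.hIt t (ht1.trans_lt ht) x (hIoo t ht hx)).hasDerivAt.sub
      ((hψdiff t x hx).2.2.hasDerivAt.const_mul δ))
    (fun t ht x hx hneg => by
      have hx' := Ioo_subset_Icc_self hx
      have hloss := logistic_loss_le hN (hβ x t (ht1.trans ht.le)) (hβbar x hx' t) hδ hδβ
        (hψbd t x hx).1.le (hψbd t x hx).2 (hI0 t ht.le x hx') (sub_neg.1 hneg).le
      have hγ₀ := hγ x t (ht1.trans ht.le)
      have hK : (βbar + 1) * (I x t - δ * ψ x t) < (β x t - γ x t) * (I x t - δ * ψ x t) :=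
        mul_lt_mul_of_neg_right (by linarith [hβbar x hx' t]) hneg
      have hid : pT I x t - δ * pT ψ x t - d * (pXX I x t - δ * pXX ψ x t)
          + α * (pX I x t - δ * pX ψ x t) = (β x t - γ x t) * (I x t - δ * ψ x t)
          - β x t / Nstar * I x t ^ 2 + -lambda0 * (δ * ψ x t) := by
        linear_combination hsol.hpde t (ht1.trans_lt ht) x (hIoo t ht hx) - δ * hψpde t x hx
      linarith)
  exact fun t ht x hx => sub_nonneg.1 (key t ht x hx)

end IsFBPSol

theorem persistence_when_eigenvalue_negative_general
    (d α μ Nstar h0 T : ℝ) (β γ : ℝ → ℝ → ℝ) (I0 : ℝ → ℝ)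
    (hd : 0 < d) (hN : 0 < Nstar) (hT : 0 < T)
    (β1 β2 γ1 γ2 : ℝ) (hβ1 : 0 < β1) (hγ1 : 0 < γ1)
    (hβb : ∀ x t, 0 ≤ t → β1 ≤ β x t ∧ β x t ≤ β2)
    (hγb : ∀ x t, 0 ≤ t → γ1 ≤ γ x t ∧ γ x t ≤ γ2)
    (hper : ∀ x t, β x (t + T) = β x t ∧ γ x (t + T) = γ x t)
    (hI0bd : I0 (-h0) = 0 ∧ I0 h0 = 0 ∧ ∀ x ∈ Set.Ioo (-h0) h0, 0 < I0 x ∧ I0 x ≤ Nstar)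
    (I : ℝ → ℝ → ℝ) (g h : ℝ → ℝ)
    (hsol : IsFBPSol d α μ Nstar h0 β γ I0 I g h)
    (t1 : ℝ) (ht1 : 0 ≤ t1)
    -- the eigenpair (λ0, ψ) on [g(t1), h(t1)] × ℝ
    (lambda0 : ℝ)
    (ψ : ℝ → ℝ → ℝ)
    (hψper : ∀ x t, ψ x (t + T) = ψ x t)
    (hψc : ContinuousOn (fun p : ℝ × ℝ => ψ p.1 p.2)
      (Set.Icc (g t1) (h t1) ×ˢ Set.univ))
    (hψdiff : ∀ t : ℝ, ∀ x ∈ Set.Ioo (g t1) (h t1),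
      DifferentiableAt ℝ (fun y => ψ y t) x ∧
      DifferentiableAt ℝ (fun y => pX ψ y t) x ∧
      DifferentiableAt ℝ (fun s => ψ x s) t)
    (hψbc : ∀ t : ℝ, ψ (g t1) t = 0 ∧ ψ (h t1) t = 0)
    (hψbd : ∀ t : ℝ, ∀ x ∈ Set.Ioo (g t1) (h t1), 0 < ψ x t ∧ ψ x t ≤ 1)
    (hψpde : ∀ t : ℝ, ∀ x ∈ Set.Ioo (g t1) (h t1),
      pT ψ x t - d * pXX ψ x t + α * pX ψ x t
        = (β x t - γ x t) * ψ x t + lambda0 * ψ x t)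
    -- β̄ is the maximum of β on [g(t1),h(t1)] × [0,T]
    (βbar : ℝ)
    (hβbar : IsGreatest
      {v : ℝ | ∃ x ∈ Set.Icc (g t1) (h t1), ∃ s ∈ Set.Icc (0:ℝ) T, v = β x s} βbar)
    (δ : ℝ) (hδpos : 0 < δ) (hδ : δ ≤ Nstar * (-lambda0) / βbar)
    (hδinit : ∀ x ∈ Set.Icc (g t1) (h t1), δ * ψ x t1 ≤ I x t1) :
    -- I dominates the lower solution for all later times
    (∀ t ≥ t1, ∀ x ∈ Set.Icc (g t1) (h t1), δ * ψ x t ≤ I x t) ∧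
    -- persistence of the disease
    Filter.liminf (fun t => sSup ((fun x => I x t) '' Set.Icc (g t1) (h t1)))
        Filter.atTop
      ≥ δ * Filter.liminf (fun t => sSup ((fun x => ψ x t) '' Set.Icc (g t1) (h t1)))
        Filter.atTop ∧
    0 < δ * Filter.liminf (fun t => sSup ((fun x => ψ x t) '' Set.Icc (g t1) (h t1)))
        Filter.atTop := by
  have hβ : ∀ x t, 0 ≤ t → 0 < β x t := fun x t ht => hβ1.trans_le (hβb x t ht).1
  have hγ : ∀ x t, 0 ≤ t → 0 ≤ γ x t := fun x t ht => hγ1.le.trans (hγb x t ht).1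
  have hβbar_pos : 0 < βbar := by
    obtain ⟨x, -, s, hs, rfl⟩ := hβbar.1
    exact hβ x s hs.1
  have hβ_le_βbar : ∀ x ∈ Icc (g t1) (h t1), ∀ t, β x t ≤ βbar := fun x hx t => by
    obtain ⟨s, hs, hts⟩ := Function.Periodic.exists_mem_Ico₀ (fun t => (hper x t).1) hT t
    exact hts ▸ hβbar.2 ⟨x, hx, s, Ico_subset_Icc_self hs, rfl⟩
  have hI_init : ∀ x ∈ Icc (g 0) (h 0), I x 0 ≤ Nstar := by
    rw [hsol.hg0, hsol.hh0]
    exact fun x hx => (hsol.hinit x hx).symm ▸ forall_mem_Icc_of_forall_mem_Ioo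
      (p := fun x => I0 x ≤ Nstar) (hI0bd.1 ▸ hN.le) (hI0bd.2.1 ▸ hN.le)
      (fun x hx => (hI0bd.2.2 x hx).2) x hx
  have hlower := hsol.mul_le_of_lower_solution hd.le hN (fun x t ht => (hβ x t ht).le) hγ ht1
    hψc hψdiff hψbc hψbd hψpde hβ_le_βbar hδpos.le ((le_div_iff₀ hβbar_pos).1 hδ) hδinit
  have hupper : ∀ t ≥ t1, ∀ x ∈ Icc (g t1) (h t1), I x t ≤ Nstar := fun t ht x hx =>
    hsol.le_Nstar hd.le hN hβ hγ hI_init t (ht1.trans ht) x (hsol.Icc_subset_of_le ht1 ht hx)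
  have hψ_le_one : ∀ t, ∀ x ∈ Icc (g t1) (h t1), ψ x t ≤ 1 := fun t =>
    forall_mem_Icc_of_forall_mem_Ioo (p := fun x => ψ x t ≤ 1) ((hψbc t).1 ▸ zero_le_one)
      ((hψbc t).2 ▸ zero_le_one) fun x hx => (hψbd t x hx).2
  obtain ⟨x₀, hx₀⟩ := nonempty_Ioo.2 (hsol.hgh t1 ht1)
  obtain ⟨m, hm, hψm⟩ := Function.Periodic.exists_pos_le (fun t => hψper x₀ t) hT.ne'
    (continuousOn_univ.1 (hψc.comp (continuous_const.prodMk continuous_id).continuousOn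
      fun t _ => ⟨Ioo_subset_Icc_self hx₀, mem_univ t⟩)) fun t => (hψbd t x₀ hx₀).1
  exact ⟨hlower, le_liminf_sSup_image_of_mul_le hδpos hm hlower hupper hψ_le_one
    fun t => ⟨x₀, Ioo_subset_Icc_self hx₀, hψm t⟩⟩

/-- **Theorem 4.2 (persistence when the principal eigenvalue is negative).** If on the
interval `[g(t1), h(t1)]` there is a positive T-periodic eigenfunction `ψ ≤ 1` with
eigenvalue `λ0 < 0`, and `0 < δ ≤ N*(−λ0)/β̄` with `δψ(·,t1) ≤ I(·,t1)`, then
`I ≥ δψ` on `[g(t1),h(t1)] × [t1,∞)` and the disease persists. -/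
theorem persistence_when_eigenvalue_negative
    (d α μ Nstar h0 T : ℝ) (β γ : ℝ → ℝ → ℝ) (I0 : ℝ → ℝ)
    (hd : 0 < d) (hα : 0 < α) (hμ : 0 < μ) (hN : 0 < Nstar) (hh0 : 0 < h0) (hT : 0 < T)
    (β1 β2 γ1 γ2 : ℝ) (hβ1 : 0 < β1) (hγ1 : 0 < γ1)
    (hβb : ∀ x t, 0 ≤ t → β1 ≤ β x t ∧ β x t ≤ β2)
    (hγb : ∀ x t, 0 ≤ t → γ1 ≤ γ x t ∧ γ x t ≤ γ2)
    (hper : ∀ x t, β x (t + T) = β x t ∧ γ x (t + T) = γ x t)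
    (hI0reg : ContDiffOn ℝ 2 I0 (Set.Icc (-h0) h0))
    (hI0bd : I0 (-h0) = 0 ∧ I0 h0 = 0 ∧ ∀ x ∈ Set.Ioo (-h0) h0, 0 < I0 x ∧ I0 x ≤ Nstar)
    (I : ℝ → ℝ → ℝ) (g h : ℝ → ℝ)
    (hsol : IsFBPSol d α μ Nstar h0 β γ I0 I g h)
    (t1 : ℝ) (ht1 : 0 ≤ t1)
    -- the eigenpair (λ0, ψ) on [g(t1), h(t1)] × ℝ
    (lambda0 : ℝ) (hlam : lambda0 < 0)
    (ψ : ℝ → ℝ → ℝ)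
    (hψper : ∀ x t, ψ x (t + T) = ψ x t)
    (hψc : ContinuousOn (fun p : ℝ × ℝ => ψ p.1 p.2)
      (Set.Icc (g t1) (h t1) ×ˢ Set.univ))
    (hψdiff : ∀ t : ℝ, ∀ x ∈ Set.Ioo (g t1) (h t1),
      DifferentiableAt ℝ (fun y => ψ y t) x ∧
      DifferentiableAt ℝ (fun y => pX ψ y t) x ∧
      DifferentiableAt ℝ (fun s => ψ x s) t)
    (hψtc : ContinuousOn (fun p : ℝ × ℝ => pT ψ p.1 p.2)
      (Set.Icc (g t1) (h t1) ×ˢ Set.univ))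
    (hψxc : ContinuousOn (fun p : ℝ × ℝ => pX ψ p.1 p.2)
      (Set.Icc (g t1) (h t1) ×ˢ Set.univ))
    (hψxxc : ContinuousOn (fun p : ℝ × ℝ => pXX ψ p.1 p.2)
      (Set.Icc (g t1) (h t1) ×ˢ Set.univ))
    (hψbc : ∀ t : ℝ, ψ (g t1) t = 0 ∧ ψ (h t1) t = 0)
    (hψbd : ∀ t : ℝ, ∀ x ∈ Set.Ioo (g t1) (h t1), 0 < ψ x t ∧ ψ x t ≤ 1)
    (hψpde : ∀ t : ℝ, ∀ x ∈ Set.Ioo (g t1) (h t1),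
      pT ψ x t - d * pXX ψ x t + α * pX ψ x t
        = (β x t - γ x t) * ψ x t + lambda0 * ψ x t)
    -- β̄ is the maximum of β on [g(t1),h(t1)] × [0,T]
    (βbar : ℝ)
    (hβbar : IsGreatest
      {v : ℝ | ∃ x ∈ Set.Icc (g t1) (h t1), ∃ s ∈ Set.Icc (0:ℝ) T, v = β x s} βbar)
    (δ : ℝ) (hδpos : 0 < δ) (hδ : δ ≤ Nstar * (-lambda0) / βbar)
    (hδinit : ∀ x ∈ Set.Icc (g t1) (h t1), δ * ψ x t1 ≤ I x t1) :
    -- I dominates the lower solution for all later times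
    (∀ t ≥ t1, ∀ x ∈ Set.Icc (g t1) (h t1), δ * ψ x t ≤ I x t) ∧
    -- persistence of the disease
    Filter.liminf (fun t => sSup ((fun x => I x t) '' Set.Icc (g t1) (h t1)))
        Filter.atTop
      ≥ δ * Filter.liminf (fun t => sSup ((fun x => ψ x t) '' Set.Icc (g t1) (h t1)))
        Filter.atTop ∧
    0 < δ * Filter.liminf (fun t => sSup ((fun x => ψ x t) '' Set.Icc (g t1) (h t1)))
        Filter.atTop :=
  persistence_when_eigenvalue_negative_general d α μ Nstar h0 T β γ I0 hd hN hT β1 β2 γ1 γ2 hβ1 hγ1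
    hβb hγb hper hI0bd I g h hsol t1 ht1 lambda0 ψ hψper hψc hψdiff hψbc hψbd hψpde βbar hβbar δ
    hδpos hδ hδinit
end
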